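/- arXiv:0907.0046 — 9 statements merged into one kernel-verified Lean document; each statement's English description precedes it below -/
import Mathlib

section
/- Let G be a connected simple graph on the vertex set {0,1,…,n}, and let F : {1,…,m} → {0,1,…,n} be a firing sequence for G, i.e., there are acyclic orientations Ω₁,…,Ω_{m+1} of G such that for each t ∈ {1,…,m} the orientation Ω_{t+1} is obtained from Ω_t by firing the vertex F(t). If i and j are adjacent vertices of G, then |F⁻¹(i)| ≤ |F⁻¹(j)| + 1, where |F⁻¹(v)| denotes the number of indices t with F(t) = v. -/
/-! Common definitions: acyclic orientations of a connected graph on `{0,1,…,n}`,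
vertex firing, the poset `P₀`, the periodic graphic arrangement and the map `φ`. -/

/-- `d` is an orientation of the simple graph `G`: it directs every edge of `G`
(`d a b` means the edge `ab` is directed from `a` to `b`). -/
def IsOrientation {n : ℕ} (G : SimpleGraph (Fin (n + 1)))
    (d : Fin (n + 1) → Fin (n + 1) → Prop) : Prop :=
  (∀ i j, d i j → G.Adj i j) ∧ ∀ i j, G.Adj i j → (d i j ↔ ¬ d j i)

/-- `d` is an acyclic orientation of `G`: an orientation with no directed cycle. -/
def IsAcyclicOrientation {n : ℕ} (G : SimpleGraph (Fin (n + 1)))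
    (d : Fin (n + 1) → Fin (n + 1) → Prop) : Prop :=
  IsOrientation G d ∧ ∀ v, ¬ Relation.TransGen d v v

/-- The vertex `i` is a source of the orientation `d`: every incident edge points away. -/
def IsSource {n : ℕ} (G : SimpleGraph (Fin (n + 1)))
    (d : Fin (n + 1) → Fin (n + 1) → Prop) (i : Fin (n + 1)) : Prop :=
  ∀ j, G.Adj i j → d i j

/-- The vertex `i` is a sink of the orientation `d`: every incident edge points toward it. -/
def IsSink {n : ℕ} (G : SimpleGraph (Fin (n + 1)))
    (d : Fin (n + 1) → Fin (n + 1) → Prop) (i : Fin (n + 1)) : Prop :=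
  ∀ j, G.Adj i j → d j i

/-- `d'` is obtained from `d` by firing the source `i`: all edges incident to `i`
are reversed, all other edges keep their direction. -/
def FireAt {n : ℕ} (G : SimpleGraph (Fin (n + 1)))
    (d d' : Fin (n + 1) → Fin (n + 1) → Prop) (i : Fin (n + 1)) : Prop :=
  IsSource G d i ∧
    ∀ j k, d' j k ↔ (((j = i ∨ k = i) ∧ d k j) ∨ ((j ≠ i ∧ k ≠ i) ∧ d j k))

/-- Membership in `P₀`: an acyclic orientation of `G` with `0` as a sink. -/
def MemP0 {n : ℕ} (G : SimpleGraph (Fin (n + 1)))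
    (d : Fin (n + 1) → Fin (n + 1) → Prop) : Prop :=
  IsAcyclicOrientation G d ∧ IsSink G d 0

/-- One step of the order on `P₀`: fire a single nonzero vertex, staying among
acyclic orientations with `0` as a sink. -/
def P0Step {n : ℕ} (G : SimpleGraph (Fin (n + 1)))
    (d d' : Fin (n + 1) → Fin (n + 1) → Prop) : Prop :=
  MemP0 G d ∧ MemP0 G d' ∧ ∃ i : Fin (n + 1), i ≠ 0 ∧ FireAt G d d' i

/-- The order relation of `P₀`: `d ≤ d'` iff there is a firing sequence from `d` to `d'`. -/
def P0le {n : ℕ} (G : SimpleGraph (Fin (n + 1)))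
    (d d' : Fin (n + 1) → Fin (n + 1) → Prop) : Prop :=
  Relation.ReflTransGen (P0Step G) d d'

/-- The complement `C` of the periodic graphic arrangement of `G`:
points avoiding all hyperplanes `x i = x j + k` for edges `ij` and integers `k`. -/
def Cset {n : ℕ} (G : SimpleGraph (Fin (n + 1))) : Set (Fin (n + 1) → ℝ) :=
  {x | ∀ i j, G.Adj i j → ∀ k : ℤ, x i ≠ x j + k}

/-- `C₀ = C ∩ {x : x₀ = 0}`. -/
def C0set {n : ℕ} (G : SimpleGraph (Fin (n + 1))) : Set (Fin (n + 1) → ℝ) :=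
  {x | x ∈ Cset G ∧ x 0 = 0}

/-- `R` is a region of `S`: a connected component of `S` (in `ℝ^{n+1}`). -/
def IsRegion {n : ℕ} (S R : Set (Fin (n + 1) → ℝ)) : Prop :=
  ∃ x ∈ S, R = connectedComponentIn S x

/-- The orientation `φ(x)` attached to a point `x`: the edge `ab` is directed
from `a` to `b` (i.e. toward `b`) when `{x b} < {x a}`, where `{·}` is the fractional part. -/
def phiDir {n : ℕ} (G : SimpleGraph (Fin (n + 1))) (x : Fin (n + 1) → ℝ)
    (a b : Fin (n + 1)) : Prop :=
  G.Adj a b ∧ Int.fract (x b) < Int.fract (x a)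

/-- Two elements of `P₀` are comparable (an edge of the comparability graph of `P₀`). -/
def ComparableP0 {n : ℕ} (G : SimpleGraph (Fin (n + 1)))
    (d d' : Fin (n + 1) → Fin (n + 1) → Prop) : Prop :=
  MemP0 G d ∧ MemP0 G d' ∧ (P0le G d d' ∨ P0le G d' d)

/-- `Q` is a connected component of the poset `P₀`: the set of elements joined to
some element of `P₀` by a chain of comparabilities. -/
def IsComponent {n : ℕ} (G : SimpleGraph (Fin (n + 1)))
    (Q : Set (Fin (n + 1) → Fin (n + 1) → Prop)) : Prop :=
  ∃ d, MemP0 G d ∧ Q = {d' | Relation.ReflTransGen (ComparableP0 G) d d'}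

/-- `m` is the meet (greatest lower bound) of `a` and `b` inside `Q ⊆ P₀`. -/
def IsMeetIn {n : ℕ} (G : SimpleGraph (Fin (n + 1)))
    (Q : Set (Fin (n + 1) → Fin (n + 1) → Prop))
    (a b m : Fin (n + 1) → Fin (n + 1) → Prop) : Prop :=
  m ∈ Q ∧ P0le G m a ∧ P0le G m b ∧ ∀ c ∈ Q, P0le G c a → P0le G c b → P0le G c m

/-- `j` is the join (least upper bound) of `a` and `b` inside `Q ⊆ P₀`. -/
def IsJoinIn {n : ℕ} (G : SimpleGraph (Fin (n + 1)))
    (Q : Set (Fin (n + 1) → Fin (n + 1) → Prop))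
    (a b j : Fin (n + 1) → Fin (n + 1) → Prop) : Prop :=
  j ∈ Q ∧ P0le G a j ∧ P0le G b j ∧ ∀ c ∈ Q, P0le G a c → P0le G b c → P0le G j c

/-- in a firing sequence, for adjacent vertices `i` and `j`,
`|F⁻¹(i)| ≤ |F⁻¹(j)| + 1`. -/
theorem firing_sequence_count_le (n m : ℕ) (G : SimpleGraph (Fin (n + 1)))
    (hG : G.Connected)
    (Ω : Fin (m + 1) → (Fin (n + 1) → Fin (n + 1) → Prop))
    (F : Fin m → Fin (n + 1))
    (hacyc : ∀ t, IsAcyclicOrientation G (Ω t))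
    (hfire : ∀ t : Fin m, FireAt G (Ω t.castSucc) (Ω t.succ) (F t))
    (i j : Fin (n + 1)) (hadj : G.Adj i j) :
    (Finset.univ.filter fun t => F t = i).card ≤
      (Finset.univ.filter fun t => F t = j).card + 1 := by
  classical
  have hij : i ≠ j := hadj.ne
  set b : Fin (m + 1) → ℤ := fun t => if Ω t j i then 1 else 0 with hbdef
  have key : ∀ t : Fin m,
      (if F t = i then (1:ℤ) else 0) - (if F t = j then 1 else 0)
        = b t.succ - b t.castSucc := by
    intro t
    obtain ⟨hsrc, hrev⟩ := hfire t
    obtain ⟨⟨horient, hiff⟩, -⟩ := hacyc t.castSucc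
    obtain ⟨⟨horient', hiff'⟩, -⟩ := hacyc t.succ
    by_cases hi : F t = i
    · have hFj : F t ≠ j := by rw [hi]; exact hij
      have hdij : Ω t.castSucc i j := by have := hsrc j (hi ▸ hadj); rwa [hi] at this
      have hnji : ¬ Ω t.castSucc j i := (hiff i j hadj).mp hdij
      have hdji' : Ω t.succ j i := by
        rw [hrev j i]
        exact Or.inl ⟨Or.inr hi.symm, hdij⟩
      simp [hbdef, hi, hFj, hnji, hdji', hij]
    · by_cases hj : F t = j
      · have hdji : Ω t.castSucc j i := by
          have := hsrc i (hj ▸ hadj.symm); rwa [hj] at this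
        have hdij' : Ω t.succ i j := by
          rw [hrev i j]
          exact Or.inl ⟨Or.inr hj.symm, hdji⟩
        have hnji' : ¬ Ω t.succ j i := (hiff' i j hadj).mp hdij'
        simp [hbdef, hi, hj, hdji, hnji', Ne.symm hij]
      · have heq : Ω t.succ j i ↔ Ω t.castSucc j i := by
          rw [hrev j i]
          constructor
          · rintro (⟨(h | h), -⟩ | ⟨-, h⟩)
            · exact absurd h.symm hj
            · exact absurd h.symm hi
            · exact h
          · intro h
            exact Or.inr ⟨⟨fun h' => hj h'.symm, fun h' => hi h'.symm⟩, h⟩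
        simp [hbdef, hi, hj, heq]
  -- telescoping
  have hcard : ∀ v : Fin (n + 1),
      ((Finset.univ.filter fun t => F t = v).card : ℤ)
        = ∑ t : Fin m, (if F t = v then (1:ℤ) else 0) := by
    intro v
    rw [Finset.card_filter]
    push_cast
    rfl
  have hsum : ((Finset.univ.filter fun t => F t = i).card : ℤ)
      - ((Finset.univ.filter fun t => F t = j).card : ℤ)
      = ∑ t : Fin m, (b t.succ - b t.castSucc) := by
    rw [hcard i, hcard j, ← Finset.sum_sub_distrib]
    exact Finset.sum_congr rfl fun t _ => key t
  set g : ℕ → ℤ := fun k => if h : k < m + 1 then b ⟨k, h⟩ else 0 with hgdef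
  have htel : ∑ t : Fin m, (b t.succ - b t.castSucc) = g m - g 0 := by
    have h1 : ∀ t : Fin m, b t.succ - b t.castSucc = g (t.1 + 1) - g t.1 := by
      intro t
      have h2 : t.1 + 1 < m + 1 := Nat.succ_lt_succ t.2
      have h3 : t.1 < m + 1 := Nat.lt_succ_of_lt t.2
      simp only [hgdef, dif_pos h2, dif_pos h3]
      rfl
    calc ∑ t : Fin m, (b t.succ - b t.castSucc)
        = ∑ t : Fin m, (g (t.1 + 1) - g t.1) := Finset.sum_congr rfl fun t _ => h1 t
      _ = ∑ k ∈ Finset.range m, (g (k + 1) - g k) :=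
          Fin.sum_univ_eq_sum_range (fun k => g (k + 1) - g k) m
      _ = g m - g 0 := Finset.sum_range_sub g m
  have hgm : g m ≤ 1 := by
    simp only [hgdef, dif_pos (Nat.lt_succ_self m), hbdef]
    split <;> norm_num
  have hg0 : 0 ≤ g 0 := by
    simp only [hgdef, dif_pos (Nat.succ_pos m), hbdef]
    split <;> norm_num
  have : ((Finset.univ.filter fun t => F t = i).card : ℤ)
      ≤ ((Finset.univ.filter fun t => F t = j).card : ℤ) + 1 := by
    have := hsum.trans htel
    omega
  exact_mod_cast this
end

section
/- Let G be a connected simple graph on the vertex set {0,1,…,n}, and let Ω₁,…,Ω_{m+1} be acyclic orientations of G, each having 0 as a sink, such that Ω_{t+1} is obtained from Ω_t by firing the vertex F(t) for a function F : {1,…,m} → {1,…,n}. Then for every vertex i ∈ {1,…,n}, |F⁻¹(i)| ≤ d(0,i) − 1, where d(0,i) denotes the graph distance in G from 0 to i. -/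
/-- in a firing sequence through acyclic orientations with `0` as a sink,
each vertex `i ≠ 0` fires at most `d(0,i) - 1` times. -/
theorem firing_count_le_dist (n m : ℕ) (G : SimpleGraph (Fin (n + 1)))
    (hG : G.Connected)
    (Ω : Fin (m + 1) → (Fin (n + 1) → Fin (n + 1) → Prop))
    (F : Fin m → Fin (n + 1)) (hF0 : ∀ t, F t ≠ 0)
    (hacyc : ∀ t, IsAcyclicOrientation G (Ω t))
    (hsink : ∀ t, IsSink G (Ω t) 0)
    (hfire : ∀ t : Fin m, FireAt G (Ω t.castSucc) (Ω t.succ) (F t)) :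
    ∀ i : Fin (n + 1), i ≠ 0 →
      (Finset.univ.filter fun t => F t = i).card ≤ G.dist 0 i - 1 := by
  classical
  set cnt : ℕ → Fin (n + 1) → ℕ := fun t v =>
    ((Finset.range t).filter fun s => ∃ h : s < m, F ⟨s, h⟩ = v).card with hcnt
  have hstep : ∀ t (htm : t < m) (x : Fin (n + 1)),
      cnt (t + 1) x = cnt t x + (if F ⟨t, htm⟩ = x then 1 else 0) := by
    intro t htm x
    simp only [hcnt, Finset.range_add_one, Finset.filter_insert]
    by_cases hF : F ⟨t, htm⟩ = x
    · rw [if_pos ⟨htm, hF⟩, if_pos hF,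
        Finset.card_insert_of_notMem (by simp)]
    · rw [if_neg (by rintro ⟨h, hfx⟩; exact hF hfx), if_neg hF]
      exact (Nat.add_zero _).symm
  have key : ∀ t (ht : t ≤ m) (v w : Fin (n + 1)),
      Ω ⟨t, Nat.lt_succ_of_le ht⟩ v w →
      cnt t v ≤ cnt t w ∧ cnt t w ≤ cnt t v + 1 := by
    intro t
    induction t with
    | zero => intro _ v w _; simp [hcnt]
    | succ t ih =>
      intro ht v w hvw
      have htm : t < m := ht
      have hfi := hfire ⟨t, htm⟩
      have hsrc : IsSource G (Ω ⟨t, Nat.lt_succ_of_le htm.le⟩) (F ⟨t, htm⟩) := hfi.1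
      have hvw' : Ω (Fin.succ ⟨t, htm⟩) v w := hvw
      rw [hfi.2 v w] at hvw'
      have hornext := (hacyc ⟨t + 1, Nat.lt_succ_of_le ht⟩).1
      have hadjvw : G.Adj v w := hornext.1 v w hvw
      have hvne : v ≠ w := hadjvw.ne
      have hor := (hacyc ⟨t, Nat.lt_succ_of_le htm.le⟩).1
      rcases hvw' with ⟨hv | hw, hwd⟩ | ⟨⟨hv, hw⟩, hd⟩
      · -- v is the fired vertex : impossible, it became a sink
        exfalso
        rw [hv] at hwd
        have hadjw : G.Adj w (F ⟨t, htm⟩) := hor.1 _ _ hwd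
        have h2 : Ω ⟨t, Nat.lt_succ_of_le htm.le⟩ (F ⟨t, htm⟩) w := hsrc w hadjw.symm
        exact ((hor.2 _ _ hadjw).mp hwd) h2
      · -- w is the fired vertex
        rw [hw] at hwd hvne ⊢
        have hih := ih htm.le (F ⟨t, htm⟩) v hwd
        rw [hstep t htm v, hstep t htm (F ⟨t, htm⟩), if_pos rfl,
          if_neg (fun h => hvne h.symm)]
        omega
      · -- neither endpoint fired
        have hih := ih htm.le v w hd
        rw [hstep t htm v, hstep t htm w, if_neg (Ne.symm hv), if_neg (Ne.symm hw)]
        omega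
  have adj0 : ∀ t : Fin m, ¬ G.Adj 0 (F t) := by
    intro t hadj
    have h1 : Ω t.castSucc (F t) 0 := hsink t.castSucc (F t) hadj
    have h2 : Ω t.succ 0 (F t) :=
      ((hfire t).2 0 (F t)).mpr (Or.inl ⟨Or.inr rfl, h1⟩)
    have h3 : Ω t.succ (F t) 0 := hsink t.succ (F t) hadj
    have hor := (hacyc t.succ).1
    exact ((hor.2 0 (F t) hadj).mp h2) h3
  have cfin : ∀ v, (Finset.univ.filter fun t => F t = v).card = cnt m v := by
    intro v
    simp only [hcnt]
    rw [show ((Finset.range m).filter fun s => ∃ h : s < m, F ⟨s, h⟩ = v)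
        = (Finset.univ.filter fun t : Fin m => F t = v).image Fin.val by
      ext s
      simp only [Finset.mem_filter, Finset.mem_range, Finset.mem_image,
        Finset.mem_univ, true_and]
      constructor
      · rintro ⟨hs, h, hf⟩; exact ⟨⟨s, h⟩, hf, rfl⟩
      · rintro ⟨⟨s', hs'⟩, hf, rfl⟩; exact ⟨hs', hs', hf⟩]
    rw [Finset.card_image_of_injective _ Fin.val_injective]
  have czero : ∀ v, G.Adj 0 v → cnt m v = 0 := by
    intro v hadj
    simp only [hcnt]
    rw [Finset.card_eq_zero, Finset.filter_eq_empty_iff]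
    rintro s hs ⟨h, hfv⟩
    exact adj0 ⟨s, h⟩ (hfv ▸ hadj)
  have ebound : ∀ v w, G.Adj v w → cnt m v ≤ cnt m w + 1 := by
    intro v w hadj
    have hor := (hacyc ⟨m, Nat.lt_succ_of_le le_rfl⟩).1
    by_cases hd : Ω ⟨m, Nat.lt_succ_of_le le_rfl⟩ v w
    · exact (key m le_rfl v w hd).1.trans (Nat.le_succ _)
    · have hd' : Ω ⟨m, Nat.lt_succ_of_le le_rfl⟩ w v :=
        not_not.mp (fun h => hd ((hor.2 v w hadj).mpr h))
      exact (key m le_rfl w v hd').2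
  intro i hi
  suffices h : ∀ k, ∀ i : Fin (n + 1), i ≠ 0 → G.dist 0 i = k →
      (Finset.univ.filter fun t => F t = i).card + 1 ≤ k by
    have hd := h (G.dist 0 i) i hi rfl
    omega
  intro k
  induction k using Nat.strong_induction_on with
  | _ k ih2 =>
    intro i hi hdist
    have hreach : G.Reachable i 0 := hG.preconnected i 0
    obtain ⟨q, hq⟩ := hreach.exists_walk_length_eq_dist
    obtain ⟨w, hadj, q', rfl⟩ := q.exists_eq_cons_of_ne hi
    rw [SimpleGraph.Walk.length_cons] at hq
    have hk : q'.length + 1 = k := by rw [hq, SimpleGraph.dist_comm, hdist]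
    by_cases hw0 : w = 0
    · subst hw0
      have h0 : cnt m i = 0 := czero i hadj.symm
      rw [cfin i, h0]
      omega
    · have hdw : G.dist 0 w ≤ q'.length := by
        have := SimpleGraph.dist_le q'.reverse
        rwa [SimpleGraph.Walk.length_reverse] at this
      have hihw := ih2 (G.dist 0 w) (by omega) w hw0 rfl
      have hcb := ebound i w hadj
      rw [cfin i]
      rw [cfin w] at hihw
      omega
end

section
/- Let G be a connected simple graph on the vertex set {0,1,…,n}. Every firing sequence F : {1,…,m} → {1,…,n} through acyclic orientations of G that all have 0 as a sink satisfies m ≤ Σ_{i=1}^{n} (d(0,i) − 1). Consequently, the preorder P₀ on the set of acyclic orientations of G with 0 as a sink, defined by Ω ≤ Ω' if and only if there is a firing sequence from Ω to Ω' through such orientations, is antisymmetric; that is, P₀ is a partially ordered set. -/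
section Aux

variable {n : ℕ} {G : SimpleGraph (Fin (n + 1))}

/-- ℕ-indexed firing chain. -/
def IsFChain (G : SimpleGraph (Fin (n + 1))) (m : ℕ)
    (Ω : ℕ → (Fin (n + 1) → Fin (n + 1) → Prop)) (F : ℕ → Fin (n + 1)) : Prop :=
  (∀ t < m, F t ≠ 0) ∧ (∀ t ≤ m, IsAcyclicOrientation G (Ω t)) ∧
  (∀ t ≤ m, IsSink G (Ω t) 0) ∧ (∀ t < m, FireAt G (Ω t) (Ω (t + 1)) (F t))

lemma seq_bound (hG : G.Connected) (m : ℕ)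
    (Ω : ℕ → (Fin (n + 1) → Fin (n + 1) → Prop)) (F : ℕ → Fin (n + 1))
    (hC : IsFChain G m Ω F) :
    m ≤ ∑ i ∈ Finset.univ.erase (0 : Fin (n + 1)), (G.dist 0 i - 1) := by
  obtain ⟨hF, hAc, hSink, hFire⟩ := hC
  set count : ℕ → Fin (n + 1) → ℕ :=
    fun t i => ((Finset.range t).filter (fun s => F s = i)).card with hcount
  have count_succ : ∀ t i, count (t + 1) i =
      if F t = i then count t i + 1 else count t i := by
    intro t i
    by_cases h : F t = i <;>
      simp [hcount, Finset.range_add_one, Finset.filter_insert, h,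
        Finset.card_insert_of_notMem, Finset.mem_filter]
  -- neighbors of 0 never fire
  have noAdj0 : ∀ t < m, ¬ G.Adj 0 (F t) := by
    intro t ht hadj
    have h1 : Ω t (F t) 0 := (hFire t ht).1 0 hadj.symm
    have h2 : Ω (t + 1) 0 (F t) := ((hFire t ht).2 0 (F t)).mpr (Or.inl ⟨Or.inr rfl, h1⟩)
    have h3 : Ω (t + 1) (F t) 0 := hSink (t + 1) ht (F t) hadj
    exact ((hAc (t + 1) ht).1.2 0 (F t) hadj).mp h2 h3
  -- alternation invariant for adjacent vertices
  have key : ∀ i j : Fin (n + 1), G.Adj i j → ∀ t, t ≤ m →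
      count t i ≤ count t j + 1 ∧ (count t i = count t j + 1 → Ω t j i) := by
    intro i j hij t
    induction t with
    | zero => intro _; constructor <;> simp [hcount]
    | succ t ih =>
      intro ht
      have htm : t < m := ht
      obtain ⟨h1, h2⟩ := ih htm.le
      have hfire := hFire t htm
      have hne : i ≠ j := hij.ne
      by_cases hi : F t = i
      · have hadj' : G.Adj (F t) j := hi ▸ hij
        have hdij : Ω t i j := hi ▸ hfire.1 j hadj'
        have hle : count t i ≤ count t j := by
          rcases Nat.lt_or_ge (count t i) (count t j + 1) with h | h
          · omega
          · exact absurd (h2 (le_antisymm h1 h))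
              (((hAc t htm.le).1.2 i j hij).mp hdij)
        have hji' : Ω (t + 1) j i :=
          (hfire.2 j i).mpr (Or.inl ⟨Or.inr hi.symm, hi ▸ hdij⟩)
        rw [count_succ, count_succ, if_pos hi, if_neg (fun h => hne (hi.symm.trans h))]
        exact ⟨by omega, fun _ => hji'⟩
      · by_cases hj : F t = j
        · rw [count_succ, count_succ, if_neg hi, if_pos hj]
          exact ⟨by omega, fun h => absurd h (by omega)⟩
        · rw [count_succ, count_succ, if_neg hi, if_neg hj]
          refine ⟨h1, fun h => ?_⟩
          have := h2 h
          exact (hfire.2 j i).mpr (Or.inr ⟨⟨fun h' => hj h'.symm, fun h' => hi h'.symm⟩, this⟩)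
  set ν : Fin (n + 1) → ℕ := fun i => count m i with hν
  have hsum : m = ∑ i : Fin (n + 1), ν i := by
    have := Finset.card_eq_sum_card_fiberwise
      (f := F) (s := Finset.range m) (t := Finset.univ) (fun x _ => Finset.mem_univ (F x))
    simpa [hν, hcount] using this
  have hν0 : ν 0 = 0 := by
    simp only [hν, hcount, Finset.card_eq_zero, Finset.filter_eq_empty_iff]
    intro t ht
    exact hF t (Finset.mem_range.mp ht)
  -- per-vertex bound by strong induction on distance
  have main : ∀ k, ∀ i : Fin (n + 1), i ≠ 0 → G.dist 0 i = k → ν i ≤ k - 1 := by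
    intro k
    induction k using Nat.strong_induction_on with
    | _ k ih =>
      intro i hi hk
      have hpos : 0 < k := hk ▸ hG.pos_dist_of_ne (Ne.symm hi)
      obtain ⟨p, hp⟩ := hG.exists_walk_length_eq_dist 0 i
      have hq : ¬ (p.reverse).Nil := SimpleGraph.Walk.not_nil_of_ne hi
      set j : Fin (n + 1) := (p.reverse).getVert 1 with hj
      have hadj : G.Adj i j := (p.reverse).adj_snd hq
      have hνij : ν i ≤ ν j + 1 := (key i j hadj m le_rfl).1
      have hlt : G.dist 0 j ≤ k - 1 := by
        have h1 : (p.reverse).tail.length + 1 = (p.reverse).length :=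
          SimpleGraph.Walk.length_tail_add_one hq
        have h2 : G.dist 0 j ≤ (p.reverse).tail.reverse.length :=
          SimpleGraph.dist_le _
        rw [SimpleGraph.Walk.length_reverse] at h2
        rw [SimpleGraph.Walk.length_reverse] at h1
        omega
      by_cases hj0 : j = 0
      · -- then Adj i 0, so i never fires
        have : ν i = 0 := by
          simp only [hν, hcount, Finset.card_eq_zero, Finset.filter_eq_empty_iff]
          intro t ht hti
          exact noAdj0 t (Finset.mem_range.mp ht) (hti ▸ (hj0 ▸ hadj).symm)
        omega
      · have hdj : 0 < G.dist 0 j := hG.pos_dist_of_ne (Ne.symm hj0)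
        have := ih (G.dist 0 j) (by omega) j hj0 rfl
        omega
  have hper : ∀ i ∈ Finset.univ.erase (0 : Fin (n + 1)), ν i ≤ G.dist 0 i - 1 := by
    intro i hi
    exact main (G.dist 0 i) i (Finset.ne_of_mem_erase hi) rfl
  calc m = ∑ i : Fin (n + 1), ν i := hsum
    _ = ∑ i ∈ Finset.univ.erase (0 : Fin (n + 1)), ν i := by
        rw [← Finset.add_sum_erase _ _ (Finset.mem_univ (0 : Fin (n + 1))), hν0, zero_add]
    _ ≤ _ := Finset.sum_le_sum hper


lemma chain_of_le {d d' : Fin (n + 1) → Fin (n + 1) → Prop}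
    (hd : MemP0 G d) (h : P0le G d d') :
    ∃ (m : ℕ) (Ω : ℕ → (Fin (n + 1) → Fin (n + 1) → Prop)) (F : ℕ → Fin (n + 1)),
      IsFChain G m Ω F ∧ Ω 0 = d ∧ Ω m = d' ∧ (0 < m ∨ d = d') := by
  induction h with
  | refl =>
    exact ⟨0, fun _ => d, fun _ => 0,
      ⟨fun t ht => absurd ht (by omega), fun _ _ => hd.1, fun _ _ => hd.2,
       fun t ht => absurd ht (by omega)⟩, rfl, rfl, Or.inr rfl⟩
  | @tail b c hab hbc ih =>
    obtain ⟨m, Ω, F, ⟨hF, hAc, hSink, hFire⟩, h0, hm, _⟩ := ih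
    obtain ⟨i, hi0, hfi⟩ := hbc.2.2
    refine ⟨m + 1, fun t => if t ≤ m then Ω t else c,
      fun t => if t < m then F t else i, ⟨?_, ?_, ?_, ?_⟩, ?_, ?_, Or.inl (by omega)⟩
    · intro t ht
      by_cases h : t < m
      · simpa [h] using hF t h
      · simpa [h] using hi0
    · intro t ht
      by_cases h : t ≤ m
      · simpa [h] using hAc t h
      · simpa [h] using hbc.2.1.1
    · intro t ht
      by_cases h : t ≤ m
      · simpa [h] using hSink t h
      · simpa [h] using hbc.2.1.2
    · intro t ht
      by_cases h : t < m
      · have h1 : t ≤ m := h.le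
        have h2 : t + 1 ≤ m := h
        simpa [h, h1, h2] using hFire t h
      · have ht' : t = m := by omega
        have h2 : ¬ (t + 1 ≤ m) := by omega
        simpa [h, h2, ht', hm] using hfi
    · simp [h0]
    · simp

lemma chain_append {m1 m2 : ℕ} {Ω1 Ω2 : ℕ → (Fin (n + 1) → Fin (n + 1) → Prop)}
    {F1 F2 : ℕ → Fin (n + 1)} (h1 : IsFChain G m1 Ω1 F1) (h2 : IsFChain G m2 Ω2 F2)
    (hglue : Ω1 m1 = Ω2 0) :
    ∃ Ω F, IsFChain G (m1 + m2) Ω F ∧ Ω 0 = Ω1 0 ∧ Ω (m1 + m2) = Ω2 m2 := by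
  obtain ⟨hF1, hAc1, hSink1, hFire1⟩ := h1
  obtain ⟨hF2, hAc2, hSink2, hFire2⟩ := h2
  refine ⟨fun t => if t ≤ m1 then Ω1 t else Ω2 (t - m1),
    fun t => if t < m1 then F1 t else F2 (t - m1), ⟨?_, ?_, ?_, ?_⟩, by simp, ?_⟩
  · intro t ht
    by_cases h : t < m1
    · simpa [h] using hF1 t h
    · simpa [h] using hF2 (t - m1) (by omega)
  · intro t ht
    by_cases h : t ≤ m1
    · simpa [h] using hAc1 t h
    · simpa [h] using hAc2 (t - m1) (by omega)
  · intro t ht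
    by_cases h : t ≤ m1
    · simpa [h] using hSink1 t h
    · simpa [h] using hSink2 (t - m1) (by omega)
  · intro t ht
    by_cases h : t < m1
    · have h1 : t ≤ m1 := h.le
      have h2 : t + 1 ≤ m1 := h
      simpa [h1, h2, h] using hFire1 t h
    · have hf := hFire2 (t - m1) (by omega)
      by_cases h' : t = m1
      · have e0 : t - m1 = 0 := by omega
        have e1 : t + 1 - m1 = 1 := by omega
        have h3 : ¬ (t + 1 ≤ m1) := by omega
        have h4 : t ≤ m1 := by omega
        show FireAt G (if t ≤ m1 then Ω1 t else Ω2 (t - m1))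
          (if t + 1 ≤ m1 then Ω1 (t + 1) else Ω2 (t + 1 - m1))
          (if t < m1 then F1 t else F2 (t - m1))
        rw [if_pos h4, if_neg h3, if_neg h, e1, h', hglue]
        simpa [e0] using hf
      · have h3 : ¬ (t ≤ m1) := by omega
        have h4 : ¬ (t + 1 ≤ m1) := by omega
        have h5 : t + 1 - m1 = t - m1 + 1 := by omega
        simp only [if_neg h3, if_neg h4, if_neg h, h5]
        exact hf
  · by_cases h : m2 = 0
    · subst h; simpa using hglue
    · have h3 : ¬ (m1 + m2 ≤ m1) := by omega
      simp [h3]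

lemma chain_pow {L : ℕ} {Ω : ℕ → (Fin (n + 1) → Fin (n + 1) → Prop)}
    {F : ℕ → Fin (n + 1)} (h : IsFChain G L Ω F) (hloop : Ω L = Ω 0) :
    ∀ N, ∃ Ω' F', IsFChain G (N * L) Ω' F' ∧ Ω' 0 = Ω 0 ∧ Ω' (N * L) = Ω 0 := by
  intro N
  induction N with
  | zero =>
    exact ⟨fun _ => Ω 0, fun _ => 0,
      ⟨fun t ht => absurd ht (by omega), fun _ _ => h.2.1 0 (Nat.zero_le _),
       fun _ _ => h.2.2.1 0 (Nat.zero_le _), fun t ht => absurd ht (by omega)⟩, rfl, rfl⟩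
  | succ N ih =>
    obtain ⟨Ω', F', h', h'0, h'e⟩ := ih
    obtain ⟨Ω'', F'', h'', h''0, h''e⟩ := chain_append h' h (by rw [h'e])
    refine ⟨Ω'', F'', ?_, ?_, ?_⟩
    · rwa [Nat.succ_mul]
    · rw [h''0, h'0]
    · rw [Nat.succ_mul]; rw [h''e, hloop]

end Aux

/-- firing sequences in `P₀` have length at most `∑_{i=1}^n (d(0,i) - 1)`;
consequently the preorder `P₀` is antisymmetric, i.e. a poset. -/
theorem P0_is_poset (n : ℕ) (G : SimpleGraph (Fin (n + 1))) (hG : G.Connected) :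
    (∀ (m : ℕ) (Ω : Fin (m + 1) → (Fin (n + 1) → Fin (n + 1) → Prop))
        (F : Fin m → Fin (n + 1)),
      (∀ t, F t ≠ 0) →
      (∀ t, IsAcyclicOrientation G (Ω t)) →
      (∀ t, IsSink G (Ω t) 0) →
      (∀ t : Fin m, FireAt G (Ω t.castSucc) (Ω t.succ) (F t)) →
      m ≤ ∑ i ∈ Finset.univ.erase (0 : Fin (n + 1)), (G.dist 0 i - 1)) ∧
    (∀ d d', MemP0 G d → MemP0 G d' → P0le G d d' → P0le G d' d → d = d') := by
  constructor
  · intro m Ω F hF hAc hSink hFire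
    refine seq_bound hG m (fun t => Ω ⟨min t m, Nat.lt_succ_of_le (min_le_right _ _)⟩)
      (fun t => if h : t < m then F ⟨t, h⟩ else 0) ⟨?_, ?_, ?_, ?_⟩
    · intro t ht; simpa [ht] using hF ⟨t, ht⟩
    · intro t _; exact hAc _
    · intro t _; exact hSink _
    · intro t ht
      have h1 : min t m = t := by omega
      have h2 : min (t + 1) m = t + 1 := by omega
      have e1 : (⟨min t m, Nat.lt_succ_of_le (min_le_right _ _)⟩ : Fin (m + 1)) =
          (⟨t, ht⟩ : Fin m).castSucc := by ext; simp [h1]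
      have e2 : (⟨min (t + 1) m, Nat.lt_succ_of_le (min_le_right _ _)⟩ : Fin (m + 1)) =
          (⟨t, ht⟩ : Fin m).succ := by ext; simp [h2]
      simp only [e1, e2, dif_pos ht]
      exact hFire ⟨t, ht⟩
  · intro d d' hd hd' hdd' hd'd
    by_contra hne
    obtain ⟨m1, Ω1, F1, h1, h10, h1m, hpos1⟩ := chain_of_le hd hdd'
    obtain ⟨m2, Ω2, F2, h2, h20, h2m, _⟩ := chain_of_le hd' hd'd
    have hm1 : 0 < m1 := by
      rcases hpos1 with h | h
      · exact h
      · exact absurd h hne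
    obtain ⟨Ω, F, h, h0, hL⟩ := chain_append h1 h2 (by rw [h1m, h20])
    set B := ∑ i ∈ Finset.univ.erase (0 : Fin (n + 1)), (G.dist 0 i - 1) with hB
    obtain ⟨Ω', F', h', _, _⟩ := chain_pow h (by rw [hL, h0, h10, h2m]) (B + 1)
    have hb := seq_bound hG _ _ _ h'
    have : B + 1 ≤ (B + 1) * (m1 + m2) := Nat.le_mul_of_pos_right _ (by omega)
    omega
end

section
/- Let G be a connected simple graph on the vertex set {0,1,…,n}. For every acyclic orientation Ω of G with 0 as a sink, there exists a point x ∈ C₀ = C ∩ {x ∈ ℝ^{n+1} : x₀ = 0} with φ(x) = Ω. That is, the map φ restricted to C₀ is surjective onto the set of acyclic orientations of G with 0 as a sink. -/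
/-- `φ` restricted to `C₀` is surjective onto the acyclic orientations
of `G` with `0` as a sink. -/
theorem phi_surjective_on_C0 (n : ℕ) (G : SimpleGraph (Fin (n + 1)))
    (hG : G.Connected) (d : Fin (n + 1) → Fin (n + 1) → Prop) (hd : MemP0 G d) :
    ∃ x ∈ C0set G, phiDir G x = d := by
  classical
  obtain ⟨⟨⟨hdadj, hdor⟩, hacyc⟩, hsink⟩ := hd
  -- auxiliary relation: reversed orientation, plus 0 below everything
  set r : Fin (n + 1) → Fin (n + 1) → Prop :=
    fun u v => (u = 0 ∧ v ≠ 0) ∨ d v u with hrdef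
  have hno0 : ∀ u, ¬ r u 0 := by
    intro u h
    rcases h with ⟨_, h⟩ | h
    · exact h rfl
    · have hadj := hdadj 0 u h
      exact ((hdor 0 u hadj).mp h) (hsink u hadj)
  have hTno0 : ∀ u, ¬ Relation.TransGen r u 0 := by
    intro u h
    cases h with
    | single h => exact hno0 _ h
    | tail _ h => exact hno0 _ h
  have key : ∀ v w, Relation.TransGen r v w → v ≠ 0 → Relation.TransGen d w v := by
    intro v w h
    induction h with
    | single h1 =>
        intro hv
        rcases h1 with ⟨h0, _⟩ | h1
        · exact absurd h0 hv
        · exact Relation.TransGen.single h1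
    | @tail u w hvu huw ih =>
        intro hv
        have hu : u ≠ 0 := fun h => hTno0 _ (h ▸ hvu)
        rcases huw with ⟨h0, _⟩ | h1
        · exact absurd h0 hu
        · exact Relation.TransGen.head h1 (ih hv)
  have hirr : ∀ v, ¬ Relation.TransGen r v v := by
    intro v h
    by_cases hv : v = 0
    · exact hTno0 v (hv ▸ h)
    · exact hacyc v (key v v h hv)
  -- rank function
  set g : Fin (n + 1) → ℕ :=
    fun v => (Finset.univ.filter (fun w => Relation.TransGen r w v)).card with hgdef
  have hmono : ∀ u v, r u v → g u < g v := by
    intro u v h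
    have hsub : insert u (Finset.univ.filter fun w => Relation.TransGen r w u) ⊆
        Finset.univ.filter fun w => Relation.TransGen r w v := by
      intro w hw
      simp only [Finset.mem_insert, Finset.mem_filter, Finset.mem_univ, true_and] at hw ⊢
      rcases hw with rfl | hw
      · exact Relation.TransGen.single h
      · exact hw.tail h
    have hu : u ∉ Finset.univ.filter fun w => Relation.TransGen r w u := by
      simp only [Finset.mem_filter, Finset.mem_univ, true_and]
      exact hirr u
    calc g u < (insert u (Finset.univ.filter fun w => Relation.TransGen r w u)).card := by
              simp only [hgdef]; rw [Finset.card_insert_of_notMem hu]; omega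
      _ ≤ _ := Finset.card_le_card hsub
  have hgle : ∀ v, g v ≤ n := by
    intro v
    have hsub : (Finset.univ.filter fun w => Relation.TransGen r w v) ⊆
        Finset.univ.erase v := by
      intro w hw
      simp only [Finset.mem_filter, Finset.mem_univ, true_and] at hw
      simp only [Finset.mem_erase, Finset.mem_univ, and_true]
      intro h; exact hirr v (h ▸ hw)
    have := Finset.card_le_card hsub
    simpa [Finset.card_erase_of_mem, Finset.card_univ] using this
  have hg0 : g 0 = 0 := by
    rw [hgdef]
    simp only [Finset.card_eq_zero, Finset.filter_eq_empty_iff]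
    intro w _
    exact hTno0 w
  -- the point x
  set x : Fin (n + 1) → ℝ := fun v => (g v : ℝ) / (n + 2) with hxdef
  have hpos : (0 : ℝ) < (n : ℝ) + 2 := by positivity
  have hx01 : ∀ v, 0 ≤ x v ∧ x v < 1 := by
    intro v
    constructor
    · positivity
    · rw [hxdef, div_lt_one hpos]
      have h1 : (g v : ℝ) ≤ n := by exact_mod_cast hgle v
      linarith
  have hfract : ∀ v, Int.fract (x v) = x v := by
    intro v
    exact Int.fract_eq_self.mpr ⟨(hx01 v).1, (hx01 v).2⟩
  have hxmono : ∀ u v, r u v → x u < x v := by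
    intro u v h
    have := hmono u v h
    have h1 : (g u : ℝ) < g v := by exact_mod_cast this
    show (g u : ℝ) / (n + 2) < (g v : ℝ) / (n + 2)
    gcongr
  -- exactly one direction on each edge
  have hone : ∀ a b, G.Adj a b → d a b ∨ d b a := by
    intro a b hab
    by_cases h : d a b
    · exact Or.inl h
    · exact Or.inr ((hdor b a hab.symm).mpr (by simpa [hdor a b hab] using h))
  have hxne : ∀ a b, G.Adj a b → x a ≠ x b := by
    intro a b hab
    rcases hone a b hab with h | h
    · exact (hxmono b a (Or.inr h)).ne'
    · exact (hxmono a b (Or.inr h)).ne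
  refine ⟨x, ⟨?_, ?_⟩, ?_⟩
  · intro i j hij k hk
    have h0i := (hx01 i).1; have h1i := (hx01 i).2
    have h0j := (hx01 j).1; have h1j := (hx01 j).2
    have hk0 : (k : ℝ) = x i - x j := by linarith
    have hkz : k = 0 := by
      have h1 : (k : ℝ) < 1 := by rw [hk0]; linarith
      have h2 : (-1 : ℝ) < k := by rw [hk0]; linarith
      have h1' : k < 1 := by exact_mod_cast h1
      have h2' : -1 < k := by exact_mod_cast h2
      omega
    apply hxne i j hij
    rw [hkz] at hk
    simpa using hk
  · show x 0 = 0
    simp only [hxdef, hg0]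
    norm_num
  · funext a b
    apply propext
    constructor
    · rintro ⟨hab, hlt⟩
      rcases hone a b hab with h | h
      · exact h
      · exfalso
        have : x a < x b := hxmono a b (Or.inr h)
        rw [hfract a, hfract b] at hlt
        linarith
    · intro h
      have hab := hdadj a b h
      refine ⟨hab, ?_⟩
      rw [hfract a, hfract b]
      exact hxmono b a (Or.inr h)
end

section
/- Let G be a connected simple graph on the vertex set {0,1,…,n}. Each region R of the complement C of the periodic graphic arrangement of G (i.e., each connected component of C) is a distributive sublattice of ℝ^{n+1} under componentwise minimum and maximum: if x, y ∈ R then x ∧ y ∈ R and x ∨ y ∈ R. The same holds for each region of C₀ = C ∩ {x : x₀ = 0}. -/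
private lemma comb_lt {k t1 t2 a b : ℝ} (h1 : k < t1) (h2 : k < t2)
    (ha : 0 ≤ a) (hb : 0 ≤ b) (hab : a + b = 1) : k < a * t1 + b * t2 := by
  rcases eq_or_lt_of_le ha with rfl | ha'
  · have hb1 : b = 1 := by linarith
    subst hb1; simp; linarith
  · have hk : a * k + b * k = k := by rw [← add_mul, hab, one_mul]
    have h3 := mul_lt_mul_of_pos_left h1 ha'
    have h4 := mul_le_mul_of_nonneg_left h2.le hb
    linarith

private lemma comb_lt' {k t1 t2 a b : ℝ} (h1 : t1 < k) (h2 : t2 < k)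
    (ha : 0 ≤ a) (hb : 0 ≤ b) (hab : a + b = 1) : a * t1 + b * t2 < k := by
  rcases eq_or_lt_of_le ha with rfl | ha'
  · have hb1 : b = 1 := by linarith
    subst hb1; simp; linarith
  · have hk : a * k + b * k = k := by rw [← add_mul, hab, one_mul]
    have h3 := mul_lt_mul_of_pos_left h1 ha'
    have h4 := mul_le_mul_of_nonneg_left h2.le hb
    linarith

private lemma floor_eq_of_preconnected {S : Set ℝ} (hS : IsPreconnected S)
    (hZ : ∀ t ∈ S, ∀ k : ℤ, t ≠ (k : ℝ)) {a b : ℝ} (ha : a ∈ S) (hb : b ∈ S) :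
    ⌊b⌋ = ⌊a⌋ := by
  by_contra h
  have hord := hS.ordConnected
  rcases lt_or_gt_of_ne h with hlt | hlt
  · have h1 : b < (⌊a⌋ : ℝ) := by
      have h2 : ((⌊b⌋ : ℤ) + 1 : ℤ) ≤ ⌊a⌋ := hlt
      have h3 := Int.lt_floor_add_one b
      have h4 : ((⌊b⌋ : ℝ) + 1) ≤ (⌊a⌋ : ℝ) := by exact_mod_cast h2
      linarith
    exact hZ _ (hord.out hb ha ⟨h1.le, Int.floor_le a⟩) ⌊a⌋ rfl
  · have h1 : a < (⌊b⌋ : ℝ) := by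
      have h2 : ((⌊a⌋ : ℤ) + 1 : ℤ) ≤ ⌊b⌋ := hlt
      have h3 := Int.lt_floor_add_one a
      have h4 : ((⌊a⌋ : ℝ) + 1) ≤ (⌊b⌋ : ℝ) := by exact_mod_cast h2
      linarith
    exact hZ _ (hord.out ha hb ⟨h1.le, Int.floor_le b⟩) ⌊b⌋ rfl

/-- The main auxiliary lemma: for `S = Cset G ∩ E` with `E` convex and closed
under `⊓` and `⊔`, every region of `S` is closed under `⊓` and `⊔`. -/
private lemma region_lattice_aux {n : ℕ} (G : SimpleGraph (Fin (n + 1)))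
    (E : Set (Fin (n + 1) → ℝ)) (hEconv : Convex ℝ E)
    (hEinf : ∀ u ∈ E, ∀ v ∈ E, u ⊓ v ∈ E) (hEsup : ∀ u ∈ E, ∀ v ∈ E, u ⊔ v ∈ E)
    (R : Set (Fin (n + 1) → ℝ)) (hR : IsRegion (Cset G ∩ E) R) :
    ∀ x ∈ R, ∀ y ∈ R, x ⊓ y ∈ R ∧ x ⊔ y ∈ R := by
  obtain ⟨x₀, hx₀, rfl⟩ := hR
  intro x hx y hy
  set S : Set (Fin (n + 1) → ℝ) := Cset G ∩ E with hSdef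
  have hRsub : connectedComponentIn S x₀ ⊆ S := connectedComponentIn_subset _ _
  have hpre : IsPreconnected (connectedComponentIn S x₀) :=
    isPreconnected_connectedComponentIn
  have hxC : x ∈ Cset G := (hRsub hx).1
  have hyC : y ∈ Cset G := (hRsub hy).1
  have hxE : x ∈ E := (hRsub hx).2
  have hyE : y ∈ E := (hRsub hy).2
  -- floors of differences along edges agree on x and y
  have hfl : ∀ i j, G.Adj i j → ⌊y i - y j⌋ = ⌊x i - x j⌋ := by
    intro i j hij
    have hcont : Continuous fun z : Fin (n + 1) → ℝ => z i - z j :=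
      (continuous_apply i).sub (continuous_apply j)
    refine floor_eq_of_preconnected (hpre.image _ hcont.continuousOn) ?_
      ⟨x, hx, rfl⟩ ⟨y, hy, rfl⟩
    rintro t ⟨z, hz, rfl⟩ k hEq
    have hEq' : z i - z j = (k : ℝ) := hEq
    exact (hRsub hz).1 i j hij k (by linarith)
  -- strict slab bounds for x
  have hxb : ∀ i j, G.Adj i j →
      (⌊x i - x j⌋ : ℝ) < x i - x j ∧ x i - x j < ⌊x i - x j⌋ + 1 := by
    intro i j hij
    refine ⟨(Int.floor_le _).lt_of_ne fun hEq => ?_, Int.lt_floor_add_one _⟩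
    exact hxC i j hij ⌊x i - x j⌋ (by linarith)
  -- strict slab bounds for y, with the floors of x
  have hyb : ∀ i j, G.Adj i j →
      (⌊x i - x j⌋ : ℝ) < y i - y j ∧ y i - y j < ⌊x i - x j⌋ + 1 := by
    intro i j hij
    have hf := hfl i j hij
    refine ⟨?_, ?_⟩
    · have h1 : (⌊y i - y j⌋ : ℝ) ≤ y i - y j := Int.floor_le _
      have h2 : y i - y j ≠ (⌊y i - y j⌋ : ℝ) := fun hEq =>
        hyC i j hij ⌊y i - y j⌋ (by linarith)
      rw [← hf]
      exact h1.lt_of_ne (Ne.symm h2)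
    · have := Int.lt_floor_add_one (y i - y j)
      rw [hf] at this
      exact this
  -- the convex slab T
  set T : Set (Fin (n + 1) → ℝ) :=
    {w | ∀ i j, G.Adj i j →
      (⌊x i - x j⌋ : ℝ) < w i - w j ∧ w i - w j < ⌊x i - x j⌋ + 1} ∩ E with hTdef
  have hTconv : Convex ℝ T := by
    refine Convex.inter ?_ hEconv
    intro u hu v hv a b ha hb hab
    intro i j hij
    obtain ⟨hu1, hu2⟩ := hu i j hij
    obtain ⟨hv1, hv2⟩ := hv i j hij
    have harith : (a • u + b • v) i - (a • u + b • v) j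
        = a * (u i - u j) + b * (v i - v j) := by
      simp [Pi.add_apply, Pi.smul_apply, smul_eq_mul]; ring
    constructor
    · rw [harith]; exact comb_lt hu1 hv1 ha hb hab
    · rw [harith]; exact comb_lt' hu2 hv2 ha hb hab
  have hTsub : T ⊆ S := by
    rintro w ⟨hw1, hw2⟩
    refine ⟨fun i j hij k hEq => ?_, hw2⟩
    obtain ⟨h1, h2⟩ := hw1 i j hij
    have hwk : w i - w j = (k : ℝ) := by linarith
    rw [hwk] at h1 h2
    have h1' : ⌊x i - x j⌋ < k := by exact_mod_cast h1
    have h2' : (k : ℝ) < ((⌊x i - x j⌋ + 1 : ℤ) : ℝ) := by push_cast; linarith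
    have h2'' : k < ⌊x i - x j⌋ + 1 := by exact_mod_cast h2'
    omega
  have hxT : x ∈ T := ⟨fun i j hij => hxb i j hij, hxE⟩
  have hinfT : x ⊓ y ∈ T := by
    refine ⟨fun i j hij => ?_, hEinf x hxE y hyE⟩
    obtain ⟨hx1, hx2⟩ := hxb i j hij
    obtain ⟨hy1, hy2⟩ := hyb i j hij
    simp only [Pi.inf_apply]
    rcases le_total (x j) (y j) with h | h
    · rw [inf_eq_left.mpr h]
      refine ⟨?_, ?_⟩
      · have : (⌊x i - x j⌋ : ℝ) + x j < x i ⊓ y i :=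
          lt_inf_iff.mpr ⟨by linarith, by linarith⟩
        linarith
      · have : x i ⊓ y i ≤ x i := inf_le_left
        linarith
    · rw [inf_eq_right.mpr h]
      refine ⟨?_, ?_⟩
      · have : (⌊x i - x j⌋ : ℝ) + y j < x i ⊓ y i :=
          lt_inf_iff.mpr ⟨by linarith, by linarith⟩
        linarith
      · have : x i ⊓ y i ≤ y i := inf_le_right
        linarith
  have hsupT : x ⊔ y ∈ T := by
    refine ⟨fun i j hij => ?_, hEsup x hxE y hyE⟩
    obtain ⟨hx1, hx2⟩ := hxb i j hij
    obtain ⟨hy1, hy2⟩ := hyb i j hij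
    simp only [Pi.sup_apply]
    rcases le_total (x j) (y j) with h | h
    · rw [sup_eq_right.mpr h]
      refine ⟨?_, ?_⟩
      · have : y i ≤ x i ⊔ y i := le_sup_right
        linarith
      · have : x i ⊔ y i < (⌊x i - x j⌋ : ℝ) + 1 + y j :=
          sup_lt_iff.mpr ⟨by linarith, by linarith⟩
        linarith
    · rw [sup_eq_left.mpr h]
      refine ⟨?_, ?_⟩
      · have : x i ≤ x i ⊔ y i := le_sup_left
        linarith
      · have : x i ⊔ y i < (⌊x i - x j⌋ : ℝ) + 1 + x j :=
          sup_lt_iff.mpr ⟨by linarith, by linarith⟩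
        linarith
  have hTcomp : T ⊆ connectedComponentIn S x :=
    hTconv.isPreconnected.subset_connectedComponentIn hxT hTsub
  have hEqComp : connectedComponentIn S x = connectedComponentIn S x₀ :=
    (connectedComponentIn_eq hx).symm
  rw [hEqComp] at hTcomp
  exact ⟨hTcomp hinfT, hTcomp hsupT⟩

/-- each region of `C` (and of `C₀`) is closed under componentwise
minimum and maximum, i.e. is a (distributive) sublattice of `ℝ^{n+1}`. -/
theorem region_is_sublattice (n : ℕ) (G : SimpleGraph (Fin (n + 1))) (hG : G.Connected) :
    (∀ R : Set (Fin (n + 1) → ℝ), IsRegion (Cset G) R →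
      ∀ x ∈ R, ∀ y ∈ R, x ⊓ y ∈ R ∧ x ⊔ y ∈ R) ∧
    (∀ R : Set (Fin (n + 1) → ℝ), IsRegion (C0set G) R →
      ∀ x ∈ R, ∀ y ∈ R, x ⊓ y ∈ R ∧ x ⊔ y ∈ R) := by
  constructor
  · intro R hR x hx y hy
    have hR' : IsRegion (Cset G ∩ Set.univ) R := by
      simpa [Set.inter_univ] using hR
    exact region_lattice_aux G Set.univ convex_univ
      (fun _ _ _ _ => Set.mem_univ _) (fun _ _ _ _ => Set.mem_univ _) R hR' x hx y hy
  · intro R hR x hx y hy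
    have hC0 : C0set G = Cset G ∩ {w : Fin (n + 1) → ℝ | w 0 = 0} := rfl
    rw [hC0] at hR
    refine region_lattice_aux G {w | w 0 = 0} ?_ ?_ ?_ R hR x hx y hy
    · intro u hu v hv a b ha hb hab
      show (a • u + b • v) 0 = 0
      simp only [Pi.add_apply, Pi.smul_apply, smul_eq_mul]
      rw [hu, hv]; ring
    · intro u hu v hv
      show (u ⊓ v) 0 = 0
      simp only [Pi.inf_apply]; rw [hu, hv]; simp
    · intro u hu v hv
      show (u ⊔ v) 0 = 0
      simp only [Pi.sup_apply]; rw [hu, hv]; simp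
end

section
/- Let G be a connected simple graph on the vertex set {0,1,…,n}, and let R be a region of C₀. If x and y are points of R with φ(x) = φ(y), then ⌊x_i⌋ = ⌊y_i⌋ for every i ∈ {0,1,…,n}. Consequently, for each acyclic orientation Ω with 0 as a sink, the fiber (φ|_R)⁻¹(Ω) is of the form R ∩ ({0} × ∏_{i=1}^{n} [a_i, a_i+1)) for some integers a₁,…,a_n, and in particular this fiber is a sublattice of ℝ^{n+1} under componentwise minimum and maximum. -/
section
variable {n : ℕ} {G : SimpleGraph (Fin (n + 1))} {R : Set (Fin (n + 1) → ℝ)}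

lemma mem_C0 (hR : IsRegion (C0set G) R) {x} (hx : x ∈ R) : x ∈ C0set G := by
  obtain ⟨z, hz, rfl⟩ := hR
  exact connectedComponentIn_subset _ _ hx

lemma fract_sub_lemma (u v : ℝ) :
    ⌊u⌋ - ⌊v⌋ = ⌊u - v⌋ + if Int.fract u < Int.fract v then 1 else 0 := by
  have h : u - v = ((⌊u⌋ - ⌊v⌋ : ℤ) : ℝ) + (Int.fract u - Int.fract v) := by
    have h1 := Int.self_sub_floor u
    have h2 := Int.self_sub_floor v
    push_cast
    linarith
  rw [h, Int.floor_intCast_add]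
  by_cases hlt : Int.fract u < Int.fract v
  · have h1 : ⌊Int.fract u - Int.fract v⌋ = -1 := by
      rw [Int.floor_eq_iff]
      constructor
      · have := Int.fract_lt_one v
        have := Int.fract_nonneg u
        push_cast
        linarith
      · push_cast
        linarith
    rw [if_pos hlt, h1]
    ring
  · have h1 : ⌊Int.fract u - Int.fract v⌋ = 0 := by
      rw [Int.floor_eq_zero_iff]
      constructor
      · simpa using not_lt.mp hlt
      · have := Int.fract_lt_one u
        have := Int.fract_nonneg v
        simpa using by linarith
    rw [if_neg hlt, h1]
    ring

lemma fract_ne {x : Fin (n + 1) → ℝ} (hx : x ∈ Cset G) {i j} (h : G.Adj i j) :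
    Int.fract (x i) ≠ Int.fract (x j) := by
  intro he
  apply hx i j h (⌊x i⌋ - ⌊x j⌋)
  have h1 := Int.self_sub_floor (x i)
  have h2 := Int.self_sub_floor (x j)
  push_cast
  linarith

lemma floor_diff_const (hR : IsRegion (C0set G) R)
    {x y : Fin (n + 1) → ℝ} (hx : x ∈ R) (hy : y ∈ R) {i j} (hij : G.Adj i j) :
    ⌊x i - x j⌋ = ⌊y i - y j⌋ := by
  obtain ⟨z, hz, rfl⟩ := hR
  set S := C0set G
  have hpre : IsPreconnected (connectedComponentIn S z) := isPreconnected_connectedComponentIn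
  have hsub : connectedComponentIn S z ⊆ S := connectedComponentIn_subset _ _
  have key : ∀ x' y', x' ∈ connectedComponentIn S z → y' ∈ connectedComponentIn S z →
      ¬ (⌊x' i - x' j⌋ < ⌊y' i - y' j⌋) := by
    intro x' y' hx' hy' hlt
    set k : ℤ := ⌊x' i - x' j⌋ + 1 with hk
    have hU : x' i - x' j < (k : ℝ) := by
      have h0 := Int.lt_floor_add_one (x' i - x' j)
      have hkr : (k : ℝ) = (⌊x' i - x' j⌋ : ℝ) + 1 := by rw [hk]; push_cast; ring
      linarith
    have hne : ∀ p ∈ connectedComponentIn S z, p i - p j ≠ (k : ℝ) := by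
      intro p hp h
      exact (hsub hp).1 i j hij k (by linarith)
    have hV : (k : ℝ) < y' i - y' j := by
      have h1 : (k : ℝ) ≤ y' i - y' j := by
        calc (k : ℝ) ≤ (⌊y' i - y' j⌋ : ℝ) := by exact_mod_cast hlt
        _ ≤ y' i - y' j := Int.floor_le _
      exact lt_of_le_of_ne h1 (fun h => hne y' hy' h.symm)
    obtain ⟨w, hws, hwU, hwV⟩ := hpre {p | p i - p j < (k : ℝ)} {p | (k : ℝ) < p i - p j}
      (isOpen_lt ((continuous_apply i).sub (continuous_apply j)) continuous_const)
      (isOpen_lt continuous_const ((continuous_apply i).sub (continuous_apply j)))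
      (fun p hp => lt_or_gt_of_ne (hne p hp))
      ⟨x', hx', hU⟩ ⟨y', hy', hV⟩
    simp only [Set.mem_setOf_eq] at hwU hwV
    linarith
  have h1 := key x y hx hy
  have h2 := key y x hy hx
  omega

lemma edge_key (hR : IsRegion (C0set G) R)
    {x y : Fin (n + 1) → ℝ} (hx : x ∈ R) (hy : y ∈ R) {i j} (hij : G.Adj i j) :
    (⌊x i⌋ - ⌊x j⌋ = ⌊y i⌋ - ⌊y j⌋) ↔
      (Int.fract (x j) < Int.fract (x i) ↔ Int.fract (y j) < Int.fract (y i)) := by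
  have hc := floor_diff_const hR hx hy hij
  have h1 := fract_sub_lemma (x i) (x j)
  have h2 := fract_sub_lemma (y i) (y j)
  have hnx := fract_ne (mem_C0 hR hx).1 hij
  have hny := fract_ne (mem_C0 hR hy).1 hij
  have PX : Int.fract (x j) < Int.fract (x i) ↔ ¬ (Int.fract (x i) < Int.fract (x j)) :=
    ⟨fun h => asymm h, fun h => lt_of_le_of_ne (not_lt.mp h) hnx.symm⟩
  have PY : Int.fract (y j) < Int.fract (y i) ↔ ¬ (Int.fract (y i) < Int.fract (y j)) :=
    ⟨fun h => asymm h, fun h => lt_of_le_of_ne (not_lt.mp h) hny.symm⟩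
  rw [PX, PY]
  by_cases px : Int.fract (x i) < Int.fract (x j) <;>
    by_cases py : Int.fract (y i) < Int.fract (y j) <;>
    simp only [px, py, if_pos, if_neg, not_true, not_false_iff] at h1 h2 ⊢ <;>
    simp <;> omega

lemma phi_eq_of_floor_eq (hR : IsRegion (C0set G) R)
    {x y : Fin (n + 1) → ℝ} (hx : x ∈ R) (hy : y ∈ R) (hfl : ∀ i, ⌊x i⌋ = ⌊y i⌋) :
    ∀ i j, G.Adj i j → (Int.fract (x j) < Int.fract (x i) ↔ Int.fract (y j) < Int.fract (y i)) := by
  intro i j hij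
  exact (edge_key hR hx hy hij).mp (by rw [hfl, hfl])

end
section
variable {n : ℕ} {G : SimpleGraph (Fin (n + 1))} {R : Set (Fin (n + 1) → ℝ)}

lemma floors_eq (hG : G.Connected) (hR : IsRegion (C0set G) R)
    {x y : Fin (n + 1) → ℝ} (hx : x ∈ R) (hy : y ∈ R)
    (hphi : ∀ i j, G.Adj i j →
      (Int.fract (x j) < Int.fract (x i) ↔ Int.fract (y j) < Int.fract (y i))) :
    ∀ i, ⌊x i⌋ = ⌊y i⌋ := by
  have key : ∀ u v : Fin (n + 1), ∀ _ : G.Walk u v, ⌊x u⌋ - ⌊y u⌋ = ⌊x v⌋ - ⌊y v⌋ := by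
    intro u v w
    induction w with
    | nil => rfl
    | @cons a b c h p ih =>
      have hstep := (edge_key hR hx hy h).mpr (hphi a b h)
      omega
  intro i
  have h := key 0 i (hG.preconnected 0 i).some
  have h0x : x 0 = 0 := (mem_C0 hR hx).2
  have h0y : y 0 = 0 := (mem_C0 hR hy).2
  rw [h0x, h0y] at h
  simp only [Int.floor_zero] at h
  omega

lemma floor_bound (hR : IsRegion (C0set G) R)
    {x y : Fin (n + 1) → ℝ} (hx : x ∈ R) (hy : y ∈ R) :
    ∀ u v : Fin (n + 1), ∀ w : G.Walk u v,
      (⌊x v⌋ - ⌊y v⌋) - (⌊x u⌋ - ⌊y u⌋) ≤ w.length ∧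
      (⌊x u⌋ - ⌊y u⌋) - (⌊x v⌋ - ⌊y v⌋) ≤ w.length := by
  intro u v w
  induction w with
  | nil => simp
  | @cons a b c h p ih =>
    have hc := floor_diff_const hR hx hy h
    have h1 := fract_sub_lemma (x a) (x b)
    have h2 := fract_sub_lemma (y a) (y b)
    rw [SimpleGraph.Walk.length_cons]
    push_cast
    split_ifs at h1 h2 <;> omega

lemma floor_min (u v : ℝ) (h : ⌊u⌋ = ⌊v⌋) : ⌊min u v⌋ = ⌊u⌋ := by
  rcases le_total u v with h' | h'
  · rw [min_eq_left h']
  · rw [min_eq_right h', h]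

lemma floor_max (u v : ℝ) (h : ⌊u⌋ = ⌊v⌋) : ⌊max u v⌋ = ⌊u⌋ := by
  rcases le_total u v with h' | h'
  · rw [max_eq_right h', h]
  · rw [max_eq_left h']

lemma fract_min (u v : ℝ) (h : ⌊u⌋ = ⌊v⌋) :
    Int.fract (min u v) = min (Int.fract u) (Int.fract v) := by
  have hu := Int.self_sub_floor u
  have hv := Int.self_sub_floor v
  rcases le_total u v with h' | h'
  · rw [min_eq_left h',
      min_eq_left (show Int.fract u ≤ Int.fract v by rw [← hu, ← hv, h]; linarith)]
  · rw [min_eq_right h',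
      min_eq_right (show Int.fract v ≤ Int.fract u by rw [← hu, ← hv, h]; linarith)]

lemma fract_max (u v : ℝ) (h : ⌊u⌋ = ⌊v⌋) :
    Int.fract (max u v) = max (Int.fract u) (Int.fract v) := by
  have hu := Int.self_sub_floor u
  have hv := Int.self_sub_floor v
  rcases le_total u v with h' | h'
  · rw [max_eq_right h',
      max_eq_right (show Int.fract u ≤ Int.fract v by rw [← hu, ← hv, h]; linarith)]
  · rw [max_eq_left h',
      max_eq_left (show Int.fract v ≤ Int.fract u by rw [← hu, ← hv, h]; linarith)]

lemma mem_R_aux (hR : IsRegion (C0set G) R) {x y : Fin (n + 1) → ℝ}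
    (hx : x ∈ R) (hy0 : y 0 = 0)
    (hfl : ∀ i, ⌊x i⌋ = ⌊y i⌋)
    (hiff : ∀ i j, G.Adj i j → Int.fract (x j) < Int.fract (x i) →
      Int.fract (y j) < Int.fract (y i)) :
    y ∈ R := by
  have hxS : x ∈ C0set G := mem_C0 hR hx
  have hseg : segment ℝ x y ⊆ C0set G := by
    rintro z ⟨s, t, hs, ht, hst, rfl⟩
    have key : ∀ a b : Fin (n + 1), G.Adj a b → Int.fract (x b) < Int.fract (x a) →
        ∀ k : ℤ, (s • x + t • y) a ≠ (s • x + t • y) b + k := by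
      intro a b hab hxab k hk
      have hyab := hiff a b hab hxab
      have e1 := Int.self_sub_floor (x a)
      have e2 := Int.self_sub_floor (x b)
      have e3 := Int.self_sub_floor (y a)
      have e4 := Int.self_sub_floor (y b)
      rw [hfl a] at e1
      rw [hfl b] at e2
      have f1 := Int.fract_nonneg (x a)
      have f2 := Int.fract_nonneg (x b)
      have f3 := Int.fract_nonneg (y a)
      have f4 := Int.fract_nonneg (y b)
      have g1 := Int.fract_lt_one (x a)
      have g2 := Int.fract_lt_one (x b)
      have g3 := Int.fract_lt_one (y a)
      have g4 := Int.fract_lt_one (y b)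
      simp only [Pi.add_apply, Pi.smul_apply, smul_eq_mul] at hk
      set δ : ℝ := s * (Int.fract (x a) - Int.fract (x b)) + t * (Int.fract (y a) - Int.fract (y b)) with hδ
      have hd1 : 0 < Int.fract (x a) - Int.fract (x b) := by linarith
      have hd2 : 0 < Int.fract (y a) - Int.fract (y b) := by linarith
      have m1 : 0 ≤ s * (Int.fract (x a) - Int.fract (x b)) := mul_nonneg hs hd1.le
      have m2 : 0 ≤ t * (Int.fract (y a) - Int.fract (y b)) := mul_nonneg ht hd2.le
      have m3 : s * (Int.fract (x a) - Int.fract (x b)) ≤ s * 1 :=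
        mul_le_mul_of_nonneg_left (by linarith) hs
      have m4 : t * (Int.fract (y a) - Int.fract (y b)) ≤ t * 1 :=
        mul_le_mul_of_nonneg_left (by linarith) ht
      have hcase : 0 < s ∨ 0 < t := by
        by_contra hc
        push_neg at hc
        linarith [hc.1, hc.2]
      have hδpos : 0 < δ := by
        rw [hδ]
        rcases hcase with hpos | hpos
        · have := mul_pos hpos hd1
          linarith
        · have := mul_pos hpos hd2
          linarith
      have hδlt : δ < 1 := by
        rw [hδ]
        rcases hcase with hpos | hpos
        · have := mul_lt_mul_of_pos_left (show Int.fract (x a) - Int.fract (x b) < 1 by linarith) hpos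
          linarith
        · have := mul_lt_mul_of_pos_left (show Int.fract (y a) - Int.fract (y b) < 1 by linarith) hpos
          linarith
      have hcast : ((k - ⌊y a⌋ + ⌊y b⌋ : ℤ) : ℝ) = δ := by
        rw [hδ, ← e1, ← e2, ← e3, ← e4]
        push_cast
        linear_combination (-1 : ℝ) * hk + ((⌊y a⌋ : ℝ) - (⌊y b⌋ : ℝ)) * hst
      have : (0 : ℤ) < k - ⌊y a⌋ + ⌊y b⌋ := by
        have : (0 : ℝ) < ((k - ⌊y a⌋ + ⌊y b⌋ : ℤ) : ℝ) := by rw [hcast]; exact hδpos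
        exact_mod_cast this
      have : k - ⌊y a⌋ + ⌊y b⌋ < 1 := by
        have : ((k - ⌊y a⌋ + ⌊y b⌋ : ℤ) : ℝ) < 1 := by rw [hcast]; exact hδlt
        exact_mod_cast this
      omega
    refine ⟨?_, ?_⟩
    · intro i j hij k hk
      rcases (fract_ne hxS.1 hij).lt_or_gt with h | h
      · refine key j i hij.symm h (-k) ?_
        push_cast
        linarith
      · exact key i j hij h k hk
    · simp only [Pi.add_apply, Pi.smul_apply, smul_eq_mul, hxS.2, hy0]
      ring
  obtain ⟨z0, hz0, rfl⟩ := hR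
  have h2 : connectedComponentIn (C0set G) z0 = connectedComponentIn (C0set G) x :=
    connectedComponentIn_eq hx
  rw [h2]
  exact (convex_segment x y).isPreconnected.subset_connectedComponentIn
    (left_mem_segment ℝ x y) hseg (right_mem_segment ℝ x y)

end

lemma phiDir_iff {n : ℕ} {G : SimpleGraph (Fin (n + 1))} {x y : Fin (n + 1) → ℝ}
    (hphi : phiDir G x = phiDir G y) {i j} (hij : G.Adj i j) :
    Int.fract (x j) < Int.fract (x i) ↔ Int.fract (y j) < Int.fract (y i) := by
  have h2 : (G.Adj i j ∧ Int.fract (x j) < Int.fract (x i)) ↔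
      (G.Adj i j ∧ Int.fract (y j) < Int.fract (y i)) :=
    iff_of_eq (congrFun (congrFun hphi i) j)
  exact ⟨fun hl => (h2.mp ⟨hij, hl⟩).2, fun hl => (h2.mpr ⟨hij, hl⟩).2⟩

lemma phiDir_eq_of_floor {n : ℕ} {G : SimpleGraph (Fin (n + 1))} {R : Set (Fin (n + 1) → ℝ)}
    (hR : IsRegion (C0set G) R) {x y : Fin (n + 1) → ℝ} (hx : x ∈ R) (hy : y ∈ R)
    (hfl : ∀ i, ⌊x i⌋ = ⌊y i⌋) : phiDir G x = phiDir G y := by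
  funext i j
  apply propext
  by_cases hij : G.Adj i j
  · exact and_congr Iff.rfl (phi_eq_of_floor_eq hR hx hy hfl i j hij)
  · exact ⟨fun hp => absurd hp.1 hij, fun hp => absurd hp.1 hij⟩


/-- on a region `R` of `C₀`, points with the same image under `φ` have
the same integer parts; hence each fiber of `φ|_R` is `R ∩ ({0} × ∏ [aᵢ, aᵢ+1))`
for integers `aᵢ`, and in particular each fiber is a sublattice of `ℝ^{n+1}`. -/
theorem fiber_is_lattice_cube (n : ℕ) (G : SimpleGraph (Fin (n + 1)))
    (hG : G.Connected) (R : Set (Fin (n + 1) → ℝ)) (hR : IsRegion (C0set G) R) :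
    (∀ x ∈ R, ∀ y ∈ R, phiDir G x = phiDir G y → ∀ i, ⌊x i⌋ = ⌊y i⌋) ∧
    (∀ d, MemP0 G d → ∃ a : Fin (n + 1) → ℤ, a 0 = 0 ∧
      {x ∈ R | phiDir G x = d} =
        R ∩ {x | x 0 = 0 ∧ ∀ i, (a i : ℝ) ≤ x i ∧ x i < a i + 1}) ∧
    (∀ d, ∀ x ∈ R, ∀ y ∈ R, phiDir G x = d → phiDir G y = d →
      (x ⊓ y ∈ R ∧ phiDir G (x ⊓ y) = d) ∧ (x ⊔ y ∈ R ∧ phiDir G (x ⊔ y) = d)) := by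
  have part1 : ∀ x ∈ R, ∀ y ∈ R, phiDir G x = phiDir G y → ∀ i, ⌊x i⌋ = ⌊y i⌋ :=
    fun x hx y hy h => floors_eq hG hR hx hy (fun i j hij => phiDir_iff h hij)
  refine ⟨part1, ?_, ?_⟩
  · intro d hd
    by_cases hex : ∃ x ∈ R, phiDir G x = d
    · obtain ⟨x0, hx0, hphi0⟩ := hex
      refine ⟨fun i => ⌊x0 i⌋, by show ⌊x0 0⌋ = 0; rw [(mem_C0 hR hx0).2]; simp, ?_⟩
      ext x
      simp only [Set.mem_setOf_eq, Set.mem_inter_iff, Set.mem_sep_iff]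
      constructor
      · rintro ⟨hxR, hphix⟩
        have hfl := part1 x hxR x0 hx0 (hphix.trans hphi0.symm)
        refine ⟨hxR, (mem_C0 hR hxR).2, fun i => ?_⟩
        rw [← hfl i]
        exact ⟨Int.floor_le _, Int.lt_floor_add_one _⟩
      · rintro ⟨hxR, _, hbox⟩
        refine ⟨hxR, ?_⟩
        have hfl : ∀ i, ⌊x i⌋ = ⌊x0 i⌋ := fun i => Int.floor_eq_iff.mpr (hbox i)
        rw [phiDir_eq_of_floor hR hxR hx0 hfl, hphi0]
    · by_cases htriv : ∀ i : Fin (n + 1), i = 0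
      · exfalso
        apply hex
        obtain ⟨z0, hz0, hReq⟩ := hR
        refine ⟨z0, hReq ▸ mem_connectedComponentIn hz0, ?_⟩
        funext i j
        have hna : ¬ G.Adj i j := by
          rw [htriv i, htriv j]
          simp
        apply propext
        exact ⟨fun h => absurd h.1 hna, fun h => absurd (hd.1.1.1 i j h) hna⟩
      · push_neg at htriv
        obtain ⟨i0, hi0⟩ := htriv
        have hz0R : ∃ z0, z0 ∈ R := by
          obtain ⟨z0, hz0, hReq⟩ := hR
          exact ⟨z0, hReq ▸ mem_connectedComponentIn hz0⟩
        obtain ⟨z0, hz0R⟩ := hz0R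
        set w : G.Walk 0 i0 := (hG.preconnected 0 i0).some with hw
        refine ⟨fun j => if j = i0 then ⌊z0 i0⌋ + w.length + 1 else 0,
          by show (if (0 : Fin (n + 1)) = i0 then ⌊z0 i0⌋ + (w.length : ℤ) + 1 else 0) = 0
             rw [if_neg (Ne.symm hi0)], ?_⟩
        ext x
        simp only [Set.mem_setOf_eq, Set.mem_inter_iff, Set.mem_sep_iff]
        constructor
        · rintro ⟨hxR, hphix⟩
          exact absurd ⟨x, hxR, hphix⟩ hex
        · rintro ⟨hxR, -, hbox⟩
          exfalso
          have hb := hbox i0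
          rw [if_pos rfl] at hb
          have hfl : ⌊x i0⌋ = ⌊z0 i0⌋ + w.length + 1 := Int.floor_eq_iff.mpr hb
          have hbd := (floor_bound hR hxR hz0R 0 i0 w).1
          have h0x : x 0 = 0 := (mem_C0 hR hxR).2
          have h0z : z0 0 = 0 := (mem_C0 hR hz0R).2
          rw [h0x, h0z] at hbd
          simp only [Int.floor_zero] at hbd
          omega
  · intro d x hx y hy hpx hpy
    have hphi : phiDir G x = phiDir G y := hpx.trans hpy.symm
    have hfl := part1 x hx y hy hphi
    have hx0 : x 0 = 0 := (mem_C0 hR hx).2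
    have hy0 : y 0 = 0 := (mem_C0 hR hy).2
    have hinf : ∀ i, (x ⊓ y) i = min (x i) (y i) := fun i => by
      rw [Pi.inf_apply]
    have hsup : ∀ i, (x ⊔ y) i = max (x i) (y i) := fun i => by
      rw [Pi.sup_apply]
    have hflmin : ∀ i, ⌊x i⌋ = ⌊(x ⊓ y) i⌋ := fun i => by
      rw [hinf i, floor_min _ _ (hfl i)]
    have hflmax : ∀ i, ⌊x i⌋ = ⌊(x ⊔ y) i⌋ := fun i => by
      rw [hsup i, floor_max _ _ (hfl i)]
    have hmin0 : (x ⊓ y) 0 = 0 := by rw [hinf 0, hx0, hy0, min_self]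
    have hmax0 : (x ⊔ y) 0 = 0 := by rw [hsup 0, hx0, hy0, max_self]
    have hminiff : ∀ i j, G.Adj i j → Int.fract (x j) < Int.fract (x i) →
        Int.fract ((x ⊓ y) j) < Int.fract ((x ⊓ y) i) := by
      intro i j hij hlt
      rw [hinf i, hinf j, fract_min _ _ (hfl i), fract_min _ _ (hfl j)]
      exact min_lt_min hlt ((phiDir_iff hphi hij).mp hlt)
    have hmaxiff : ∀ i j, G.Adj i j → Int.fract (x j) < Int.fract (x i) →
        Int.fract ((x ⊔ y) j) < Int.fract ((x ⊔ y) i) := by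
      intro i j hij hlt
      rw [hsup i, hsup j, fract_max _ _ (hfl i), fract_max _ _ (hfl j)]
      exact max_lt_max hlt ((phiDir_iff hphi hij).mp hlt)
    have hminR : x ⊓ y ∈ R := mem_R_aux hR hx hmin0 hflmin hminiff
    have hmaxR : x ⊔ y ∈ R := mem_R_aux hR hx hmax0 hflmax hmaxiff
    exact ⟨⟨hminR, (phiDir_eq_of_floor hR hminR hx (fun i => (hflmin i).symm)).trans hpx⟩,
      ⟨hmaxR, (phiDir_eq_of_floor hR hmaxR hx (fun i => (hflmax i).symm)).trans hpx⟩⟩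
end

section
/- Let G be a connected simple graph on the vertex set {0,1,…,n}, let R be a region of C₀, let x ∈ R, and let λ > 0 satisfy {x_j} < 1 − λ for every j ∈ {1,…,n}. Then the point y = x + λ·(0,1,…,1) lies in the same region R, and φ(y) = φ(x). -/
/-- translating a point of a region `R` of `C₀` by `λ·(0,1,…,1)`,
where `{x j} < 1 - λ` for all nonzero `j`, stays in `R` and preserves `φ`. -/
theorem translate_stays_in_region (n : ℕ) (G : SimpleGraph (Fin (n + 1)))
    (hG : G.Connected) (R : Set (Fin (n + 1) → ℝ)) (hR : IsRegion (C0set G) R)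
    (x : Fin (n + 1) → ℝ) (hx : x ∈ R)
    (lam : ℝ) (hlam : 0 < lam)
    (hfr : ∀ j : Fin (n + 1), j ≠ 0 → Int.fract (x j) < 1 - lam) :
    (fun i => if i = 0 then x i else x i + lam) ∈ R ∧
    phiDir G (fun i => if i = 0 then x i else x i + lam) = phiDir G x := by
  obtain ⟨x₀, hx₀S, rfl⟩ := hR
  have hxS : x ∈ C0set G := connectedComponentIn_subset _ _ hx
  have hx0 : x 0 = 0 := hxS.2
  have hpos : ∀ j, G.Adj 0 j → 0 < Int.fract (x j) := by
    intro j hadj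
    rcases lt_or_eq_of_le (Int.fract_nonneg (x j)) with h | h
    · exact h
    · exfalso
      have hxj : x j = (⌊x j⌋ : ℝ) := by
        have h2 := h.symm
        unfold Int.fract at h2
        linarith
      exact hxS.1 0 j hadj (-⌊x j⌋)
        (show x 0 = x j + ((-⌊x j⌋ : ℤ) : ℝ) by rw [hx0]; push_cast; linarith)
  have hfract : ∀ (j : Fin (n + 1)) (t : ℝ), j ≠ 0 → 0 ≤ t → t ≤ lam →
      Int.fract (x j + t) = Int.fract (x j) + t := by
    intro j t hj ht htl
    have h1 : x j + t = (Int.fract (x j) + t) + (⌊x j⌋ : ℤ) := by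
      unfold Int.fract; push_cast; ring
    rw [h1, Int.fract_add_intCast, Int.fract_eq_self.2
      ⟨add_nonneg (Int.fract_nonneg _) ht, by have := hfr j hj; linarith⟩]
  have hmem : ∀ t : ℝ, 0 ≤ t → t ≤ lam →
      (fun i => if i = 0 then x i else x i + t) ∈ C0set G := by
    intro t ht htl
    constructor
    · intro i j hadj k h
      by_cases hi : i = 0 <;> by_cases hj : j = 0
      · subst hi; subst hj; exact G.irrefl hadj
      · subst hi
        simp only [eq_self_iff_true, ite_true, if_neg hj] at h
        have hzero : x j + t = ((-k : ℤ) : ℝ) := by rw [hx0] at h; push_cast; linarith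
        have h2 : Int.fract (x j + t) = 0 := by rw [hzero, Int.fract_intCast]
        rw [hfract j t hj ht htl] at h2
        have := hpos j hadj
        linarith
      · subst hj
        simp only [eq_self_iff_true, ite_true, if_neg hi] at h
        have hzero : x i + t = ((k : ℤ) : ℝ) := by rw [hx0] at h; push_cast at h ⊢; linarith
        have h2 : Int.fract (x i + t) = 0 := by rw [hzero, Int.fract_intCast]
        rw [hfract i t hi ht htl] at h2
        have := hpos i hadj.symm
        linarith
      · simp only [if_neg hi, if_neg hj] at h
        exact hxS.1 i j hadj k (by linarith)
    · simp [hx0]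
  have hseg : ∀ s : ℝ, 0 ≤ s → s ≤ lam →
      (fun i => if i = 0 then x i else x i + s) ∈ connectedComponentIn (C0set G) x := by
    have hcont : Continuous (fun t : ℝ => (fun i : Fin (n + 1) =>
        if i = 0 then x i else x i + t)) := by
      apply continuous_pi
      intro i
      by_cases hi : i = 0 <;> simp only [hi, if_true, if_false, ite_true, ite_false] <;> fun_prop
    have hFconn : IsPreconnected ((fun t : ℝ => (fun i : Fin (n + 1) =>
        if i = 0 then x i else x i + t)) '' Set.Icc 0 lam) :=
      isPreconnected_Icc.image _ hcont.continuousOn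
    have hxF : x ∈ (fun t : ℝ => (fun i : Fin (n + 1) =>
        if i = 0 then x i else x i + t)) '' Set.Icc 0 lam := by
      refine ⟨0, ⟨le_refl 0, hlam.le⟩, ?_⟩
      funext i
      by_cases hi : i = 0 <;> simp [hi]
    have hFS : (fun t : ℝ => (fun i : Fin (n + 1) =>
        if i = 0 then x i else x i + t)) '' Set.Icc 0 lam ⊆ C0set G := by
      rintro _ ⟨t, ⟨ht, htl⟩, rfl⟩
      exact hmem t ht htl
    intro s hs hsl
    exact hFconn.subset_connectedComponentIn hxF hFS ⟨s, ⟨hs, hsl⟩, rfl⟩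
  have hRx : connectedComponentIn (C0set G) x₀ = connectedComponentIn (C0set G) x :=
    connectedComponentIn_eq hx
  have hiff : ∀ a b : Fin (n + 1), G.Adj a b →
      (Int.fract (if b = 0 then x b else x b + lam) <
        Int.fract (if a = 0 then x a else x a + lam) ↔
        Int.fract (x b) < Int.fract (x a)) := by
    intro a b hadj
    by_cases ha : a = 0 <;> by_cases hb : b = 0
    · subst ha; subst hb; exact absurd hadj G.irrefl
    · subst ha
      rw [if_pos rfl, if_neg hb, hx0, Int.fract_zero, hfract b lam hb hlam.le le_rfl]
      have := Int.fract_nonneg (x b)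
      constructor <;> intro h <;> linarith
    · subst hb
      rw [if_pos rfl, if_neg ha, hx0, Int.fract_zero, hfract a lam ha hlam.le le_rfl]
      have h1 := hpos a hadj.symm
      constructor <;> intro _ <;> linarith
    · rw [if_neg ha, if_neg hb, hfract a lam ha hlam.le le_rfl,
        hfract b lam hb hlam.le le_rfl]
      constructor <;> intro h <;> linarith
  constructor
  · rw [hRx]
    exact hseg lam hlam.le le_rfl
  · funext a b
    apply propext
    unfold phiDir
    exact and_congr_right fun hadj => hiff a b hadj
end

section
/- Let G be a connected simple graph on the vertex set {0,1,…,n} and let R be a region of C₀. If y and z are points of R with y_i ≤ z_i for every i ∈ {0,1,…,n}, then φ(y) ≤ φ(z) in the poset P₀; that is, there is a firing sequence from φ(y) to φ(z) through acyclic orientations of G with 0 as a sink. In other words, the restriction φ|_R : R → P₀ is a poset homomorphism. -/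
/-! ### Auxiliary lemmas -/

private lemma hfloor {r : ℝ} {k : ℤ} (h1 : (k : ℝ) < r) (h2 : r < k + 1) : ⌊r⌋ = k :=
  Int.floor_eq_iff.2 ⟨h1.le, h2⟩

private lemma notInt_of_floor_lt {r : ℝ} (h : (⌊r⌋ : ℝ) < r) (c : ℤ) : r ≠ (c : ℝ) := by
  rintro rfl
  simp at h

private lemma fract_pos_of_floor_lt {r : ℝ} (h : (⌊r⌋ : ℝ) < r) : 0 < Int.fract r := by
  have := Int.floor_add_fract r
  linarith

/-- In `C`, fractional parts of adjacent coordinates differ. -/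
private lemma adj_fract_ne {n : ℕ} {G : SimpleGraph (Fin (n + 1))} {x : Fin (n + 1) → ℝ}
    (hx : x ∈ Cset G) {i j : Fin (n + 1)} (h : G.Adj i j) :
    Int.fract (x i) ≠ Int.fract (x j) := by
  intro heq
  obtain ⟨zz, hzz⟩ := Int.fract_eq_fract.1 heq
  exact hx i j h zz (by linarith)

/-- Lemma A: `φ(x) ∈ P₀` for `x ∈ C₀`. -/
private lemma memP0_phi {n : ℕ} {G : SimpleGraph (Fin (n + 1))} {x : Fin (n + 1) → ℝ}
    (hx : x ∈ C0set G) : MemP0 G (phiDir G x) := by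
  obtain ⟨hxC, hx0⟩ := hx
  refine ⟨⟨⟨fun i j h => h.1, fun i j h => ?_⟩, fun v hv => ?_⟩, fun j hj => ?_⟩
  · constructor
    · rintro ⟨-, hlt⟩ ⟨-, hlt'⟩
      exact absurd hlt' (not_lt.2 hlt.le)
    · intro hn
      refine ⟨h, ?_⟩
      rcases (adj_fract_ne hxC h).lt_or_gt with hlt | hlt
      · exact absurd ⟨h.symm, hlt⟩ hn
      · exact hlt
  · have key : ∀ a b, Relation.TransGen (phiDir G x) a b →
        Int.fract (x b) < Int.fract (x a) := by
      intro a b hab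
      induction hab with
      | single h => exact h.2
      | tail _ h ih => exact lt_trans h.2 ih
    exact lt_irrefl _ (key v v hv)
  · refine ⟨hj.symm, ?_⟩
    have h0 : Int.fract (x 0) = 0 := by rw [hx0]; exact Int.fract_zero
    rw [h0]
    have hne := adj_fract_ne hxC hj.symm
    rw [h0] at hne
    exact lt_of_le_of_ne (Int.fract_nonneg _) (Ne.symm hne)

/-- Lemma B: characterization of `φ` in terms of floors. -/
private lemma phi_iff_floor {n : ℕ} {G : SimpleGraph (Fin (n + 1))} {x : Fin (n + 1) → ℝ}
    (hx : x ∈ Cset G) {i j : Fin (n + 1)} (h : G.Adj i j) :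
    phiDir G x i j ↔ ⌊x i - x j⌋ = ⌊x i⌋ - ⌊x j⌋ := by
  have hne := adj_fract_ne hx h
  have e1 := Int.floor_add_fract (x i)
  have e2 := Int.floor_add_fract (x j)
  have f1 := Int.fract_nonneg (x i)
  have f2 := Int.fract_nonneg (x j)
  have g1 := Int.fract_lt_one (x i)
  have g2 := Int.fract_lt_one (x j)
  constructor
  · rintro ⟨-, hlt⟩
    apply hfloor <;> push_cast <;> linarith
  · intro hf
    refine ⟨h, ?_⟩
    rcases hne.lt_or_gt with hlt | hlt
    · exfalso
      have : ⌊x i - x j⌋ = ⌊x i⌋ - ⌊x j⌋ - 1 := by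
        apply hfloor <;> push_cast <;> linarith
      omega
    · exact hlt

/-- If two points of `C` have the same coordinate floors and the same floors of
differences along edges, their orientations agree. -/
private lemma phi_eq_of_floors {n : ℕ} {G : SimpleGraph (Fin (n + 1))}
    {x y : Fin (n + 1) → ℝ} (hx : x ∈ Cset G) (hy : y ∈ Cset G)
    (hfl : ∀ a, ⌊x a⌋ = ⌊y a⌋)
    (hd : ∀ a b, G.Adj a b → ⌊x a - x b⌋ = ⌊y a - y b⌋) :
    phiDir G x = phiDir G y := by
  funext a b
  apply propext
  by_cases hab : G.Adj a b
  · rw [phi_iff_floor hx hab, phi_iff_floor hy hab, hfl, hfl, hd a b hab]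
  · constructor <;> rintro ⟨h, -⟩ <;> exact absurd h hab


private lemma preconnected_int_eq {s : Set ℝ} (hpre : IsPreconnected s)
    (hint : ∀ r ∈ s, ∃ m : ℤ, r = (m : ℝ)) {a b : ℝ} (ha : a ∈ s) (hb : b ∈ s) :
    a = b := by
  by_contra hne
  wlog hab : a < b generalizing a b
  · exact this hb ha (Ne.symm hne) ((Ne.lt_or_gt hne).resolve_left hab)
  obtain ⟨ma, rfl⟩ := hint a ha
  obtain ⟨mb, rfl⟩ := hint b hb
  have hmm : ma < mb := by exact_mod_cast hab
  have hmm' : (ma : ℝ) + 1 ≤ mb := by exact_mod_cast hmm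
  have hc : ((ma : ℝ) + 1/2) ∈ s :=
    hpre.Icc_subset ha hb ⟨by linarith, by linarith⟩
  obtain ⟨mc, hmc⟩ := hint _ hc
  have h2 : (2 * mc : ℝ) = 2 * ma + 1 := by linarith
  have h3 : (2 * mc : ℤ) = 2 * ma + 1 := by exact_mod_cast h2
  omega

/-- Lemma C: the floor of `x i - x j` (for an edge `ij`) is constant on a region. -/
private lemma floor_diff_constant {n : ℕ} (G : SimpleGraph (Fin (n + 1)))
    (x0 : Fin (n + 1) → ℝ) {y z : Fin (n + 1) → ℝ}
    (hy : y ∈ connectedComponentIn (C0set G) x0)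
    (hz : z ∈ connectedComponentIn (C0set G) x0)
    {i j : Fin (n + 1)} (hadj : G.Adj i j) :
    ⌊y i - y j⌋ = ⌊z i - z j⌋ := by
  set s := connectedComponentIn (C0set G) x0 with hs
  have hsub : s ⊆ C0set G := connectedComponentIn_subset _ _
  have hpre : IsPreconnected s := isPreconnected_connectedComponentIn
  set F : (Fin (n + 1) → ℝ) → ℝ := fun u => (⌊u i - u j⌋ : ℝ) with hF
  have hcont : ContinuousOn F s := by
    intro u hu
    have hC := (hsub hu).1 i j hadj
    have hflt : ((⌊u i - u j⌋ : ℤ) : ℝ) < u i - u j := by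
      refine lt_of_le_of_ne (Int.floor_le _) fun hh => hC ⌊u i - u j⌋ (by linarith)
    have hopen : IsOpen {v : Fin (n + 1) → ℝ |
        ((⌊u i - u j⌋ : ℤ) : ℝ) < v i - v j ∧ v i - v j < (⌊u i - u j⌋ : ℤ) + 1} := by
      have : Continuous fun v : Fin (n + 1) → ℝ => v i - v j :=
        (continuous_apply i).sub (continuous_apply j)
      exact (isOpen_Ioo (a := ((⌊u i - u j⌋ : ℤ) : ℝ)) (b := (⌊u i - u j⌋ : ℤ) + 1)).preimage this
    have hmem : u ∈ {v : Fin (n + 1) → ℝ |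
        ((⌊u i - u j⌋ : ℤ) : ℝ) < v i - v j ∧ v i - v j < (⌊u i - u j⌋ : ℤ) + 1} :=
      ⟨hflt, Int.lt_floor_add_one _⟩
    have hev : F =ᶠ[nhds u] fun _ => ((⌊u i - u j⌋ : ℤ) : ℝ) :=
      Filter.eventuallyEq_of_mem (hopen.mem_nhds hmem) fun v hv => by
        simp only [hF]
        rw [hfloor hv.1 hv.2]
    exact hev.continuousAt.continuousWithinAt
  have himg : IsPreconnected (F '' s) := hpre.image F hcont
  have hint : ∀ r ∈ F '' s, ∃ m : ℤ, r = (m : ℝ) := by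
    rintro r ⟨u, -, rfl⟩
    exact ⟨⌊u i - u j⌋, rfl⟩
  have h := preconnected_int_eq himg hint ⟨y, hy, rfl⟩ ⟨z, hz, rfl⟩
  simp only [hF] at h
  exact_mod_cast h


/-- The key inductive step: if some coordinate floor can still increase, there is a
point `w` one "firing" further along, closer to `z`. -/
private lemma step_exists {n : ℕ} (G : SimpleGraph (Fin (n + 1)))
    {y z : Fin (n + 1) → ℝ} (hy : y ∈ C0set G) (hz : z ∈ C0set G)
    (hfd : ∀ a b, G.Adj a b → ⌊y a - y b⌋ = ⌊z a - z b⌋)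
    (hle : ∀ a, y a ≤ z a) (hne : ∃ i, ⌊y i⌋ < ⌊z i⌋) :
    ∃ w : Fin (n + 1) → ℝ, w ∈ C0set G ∧
      (∀ a b, G.Adj a b → ⌊w a - w b⌋ = ⌊z a - z b⌋) ∧
      (∀ a, w a ≤ z a) ∧
      (∑ a, (⌊z a⌋ - ⌊w a⌋)) = (∑ a, (⌊z a⌋ - ⌊y a⌋)) - 1 ∧
      Relation.ReflTransGen (P0Step G) (phiDir G y) (phiDir G w) := by
  classical
  obtain ⟨hyC, hy0⟩ := hy
  obtain ⟨hzC, hz0⟩ := hz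
  have hyd : ∀ a b, G.Adj a b →
      ((⌊y a - y b⌋ : ℝ) < y a - y b ∧ y a - y b < ⌊y a - y b⌋ + 1) := by
    intro a b hab
    refine ⟨lt_of_le_of_ne (Int.floor_le _) fun hh => hyC a b hab ⌊y a - y b⌋ (by linarith), ?_⟩
    exact_mod_cast Int.lt_floor_add_one (y a - y b)
  have hzd : ∀ a b, G.Adj a b →
      ((⌊y a - y b⌋ : ℝ) < z a - z b ∧ z a - z b < ⌊y a - y b⌋ + 1) := by
    intro a b hab
    have h1 := hfd a b hab
    have h2 : ((⌊z a - z b⌋ : ℤ) : ℝ) < z a - z b :=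
      lt_of_le_of_ne (Int.floor_le _) fun hh => hzC a b hab ⌊z a - z b⌋ (by linarith)
    have h3 : z a - z b < (⌊z a - z b⌋ : ℝ) + 1 := Int.lt_floor_add_one _
    rw [h1]
    exact ⟨h2, h3⟩
  obtain ⟨i0, hi0⟩ := hne
  set V : Finset (Fin (n + 1)) := Finset.univ.filter (fun a => ⌊y a⌋ < ⌊z a⌋) with hVdef
  have hVne : V.Nonempty := ⟨i0, by simp [hVdef, hi0]⟩
  set T : Fin (n + 1) → ℝ := fun a => ((⌊y a⌋ : ℝ) + 1 - y a) / (z a - y a) with hT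
  obtain ⟨i, hiV, hmin⟩ := V.exists_min_image T hVne
  have hiV' : ⌊y i⌋ < ⌊z i⌋ := by simpa [hVdef] using hiV
  have hmoving : ∀ a, ⌊y a⌋ < ⌊z a⌋ → y a < z a := by
    intro a ha
    have h1 : y a < (⌊y a⌋ : ℝ) + 1 := Int.lt_floor_add_one _
    have h2 : ((⌊y a⌋ : ℝ) + 1) ≤ ((⌊z a⌋ : ℤ) : ℝ) := by exact_mod_cast ha
    have h3 : ((⌊z a⌋ : ℤ) : ℝ) ≤ z a := Int.floor_le _
    linarith
  have hfloorup : ∀ a, ⌊y a⌋ < ⌊z a⌋ → ((⌊y a⌋ : ℝ) + 1) ≤ z a := by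
    intro a ha
    have h2 : ((⌊y a⌋ : ℝ) + 1) ≤ ((⌊z a⌋ : ℤ) : ℝ) := by exact_mod_cast ha
    linarith [Int.floor_le (z a)]
  have hzyi : 0 < z i - y i := sub_pos.2 (hmoving i hiV')
  set ts : ℝ := T i with hts
  have hts_pos : 0 < ts :=
    div_pos (by linarith [Int.lt_floor_add_one (y i)]) hzyi
  have hts_le1 : ts ≤ 1 := by
    rw [hts, hT, div_le_one hzyi]
    linarith [hfloorup i hiV']
  set t : ℝ := ts / 2 with htdef
  have ht_pos : 0 < t := by positivity
  have ht_lt : t < ts := by linarith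
  have ht_lt1 : t < 1 := by linarith
  set p : Fin (n + 1) → ℝ := fun a => y a + t * (z a - y a) with hp
  set q : Fin (n + 1) → ℝ := fun a => y a + ts * (z a - y a) with hq
  set m : ℤ := ⌊y i⌋ + 1 with hm
  set w : Fin (n + 1) → ℝ := Function.update p i ((m : ℝ)) with hw
  have hp_lb : ∀ a, y a ≤ p a := fun a =>
    le_add_of_nonneg_right (mul_nonneg ht_pos.le (sub_nonneg.2 (hle a)))
  have hq_lb : ∀ a, y a ≤ q a := fun a =>
    le_add_of_nonneg_right (mul_nonneg hts_pos.le (sub_nonneg.2 (hle a)))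
  have hp_ub : ∀ a, p a ≤ z a := by
    intro a
    have h := hle a
    simp only [hp]
    nlinarith
  have hq_ub : ∀ a, q a ≤ z a := by
    intro a
    have h := hle a
    simp only [hq]
    nlinarith
  have hpd : ∀ a b, G.Adj a b →
      ((⌊y a - y b⌋ : ℝ) < p a - p b ∧ p a - p b < ⌊y a - y b⌋ + 1) := by
    intro a b hab
    have h1 := hyd a b hab
    have h2 := hzd a b hab
    have hcomb : p a - p b = (1 - t) * (y a - y b) + t * (z a - z b) := by
      simp only [hp]; ring
    rw [hcomb]
    constructor <;> nlinarith [h1.1, h1.2, h2.1, h2.2]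
  have hqd : ∀ a b, G.Adj a b →
      ((⌊y a - y b⌋ : ℝ) < q a - q b ∧ q a - q b < ⌊y a - y b⌋ + 1) := by
    intro a b hab
    have h1 := hyd a b hab
    have h2 := hzd a b hab
    have hcomb : q a - q b = (1 - ts) * (y a - y b) + ts * (z a - z b) := by
      simp only [hq]; ring
    rw [hcomb]
    constructor <;> nlinarith [h1.1, h1.2, h2.1, h2.2]
  have hq_i : q i = (m : ℝ) := by
    simp only [hq, hts, hT]
    rw [div_mul_cancel₀ _ (ne_of_gt hzyi)]
    push_cast [hm]
    ring
  have hqV_ub : ∀ a, ⌊y a⌋ < ⌊z a⌋ → q a ≤ (⌊y a⌋ : ℝ) + 1 := by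
    intro a ha
    have hza : 0 < z a - y a := sub_pos.2 (hmoving a ha)
    have hTa : ts ≤ T a := hmin a (by simp [hVdef, ha])
    have h1 : ts * (z a - y a) ≤ T a * (z a - y a) :=
      mul_le_mul_of_nonneg_right hTa hza.le
    have heq : y a + T a * (z a - y a) = (⌊y a⌋ : ℝ) + 1 := by
      rw [hT]
      rw [div_mul_cancel₀ _ (ne_of_gt hza)]
      ring
    simp only [hq]
    linarith
  have hq_ub' : ∀ a, q a ≤ (⌊y a⌋ : ℝ) + 1 := by
    intro a
    rcases lt_or_ge (y a) (z a) with hmov | hconst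
    · by_cases haV : ⌊y a⌋ < ⌊z a⌋
      · exact hqV_ub a haV
      · have hfe : ⌊z a⌋ = ⌊y a⌋ :=
          le_antisymm (not_lt.1 haV) (Int.floor_le_floor (hle a))
        have := Int.lt_floor_add_one (z a)
        rw [hfe] at this
        linarith [hq_ub a]
    · have hzya : z a = y a := le_antisymm hconst (hle a)
      have : q a = y a := by simp only [hq, hzya]; ring
      rw [this]
      linarith [Int.lt_floor_add_one (y a)]
  have hp_fub : ∀ a, p a < (⌊y a⌋ : ℝ) + 1 := by
    intro a
    rcases lt_or_ge (y a) (z a) with hmov | hconst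
    · have hpq : p a < q a := by
        simp only [hp, hq]
        nlinarith [sub_pos.2 hmov]
      linarith [hq_ub' a]
    · have hzya : z a = y a := le_antisymm hconst (hle a)
      have : p a = y a := by simp only [hp, hzya]; ring
      rw [this]
      exact Int.lt_floor_add_one (y a)
  have hpfloor : ∀ a, ⌊p a⌋ = ⌊y a⌋ := by
    intro a
    refine Int.floor_eq_iff.2 ⟨le_trans (Int.floor_le _) (hp_lb a), ?_⟩
    push_cast
    exact hp_fub a
  have hadjfloor : ∀ b, G.Adj i b → ⌊y b⌋ = m - 1 - ⌊y i - y b⌋ := by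
    intro b hib
    have hqd' := hqd i b hib
    rw [hq_i] at hqd'
    have hlb : (⌊y b⌋ : ℝ) ≤ q b := le_trans (Int.floor_le _) (hq_lb b)
    have hub : q b ≤ (⌊y b⌋ : ℝ) + 1 := hq_ub' b
    have h1 : ¬(m - ⌊y i - y b⌋ ≤ ⌊y b⌋) := by
      intro hh
      have : ((m - ⌊y i - y b⌋ : ℤ) : ℝ) ≤ ((⌊y b⌋ : ℤ) : ℝ) := by exact_mod_cast hh
      push_cast at this
      linarith [hqd'.1]
    have h2 : ¬(⌊y b⌋ ≤ m - ⌊y i - y b⌋ - 2) := by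
      intro hh
      have : ((⌊y b⌋ : ℤ) : ℝ) ≤ ((m - ⌊y i - y b⌋ - 2 : ℤ) : ℝ) := by exact_mod_cast hh
      push_cast at this
      linarith [hqd'.2]
    omega
  have hpb_strict : ∀ b, G.Adj i b → (⌊y b⌋ : ℝ) < p b := by
    intro b hib
    rcases lt_or_ge (y b) (z b) with hmov | hconst
    · have : y b < p b := by
        simp only [hp]
        nlinarith [sub_pos.2 hmov]
      linarith [Int.floor_le (y b)]
    · have hzb : z b = y b := le_antisymm hconst (hle b)
      have hpb : p b = y b := by simp only [hp, hzb]; ring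
      have hqb2 : q b = y b := by simp only [hq, hzb]; ring
      have hqd' := hqd i b hib
      rw [hq_i, hqb2] at hqd'
      have hflR : ((⌊y b⌋ : ℤ) : ℝ) = (m : ℝ) - 1 - (⌊y i - y b⌋ : ℝ) := by
        have := hadjfloor b hib
        push_cast [this]
        ring
      rw [hpb]
      push_cast at hflR
      linarith [hqd'.2]
  have hsource : ∀ b, G.Adj i b → Int.fract (p b) < Int.fract (p i) := by
    intro b hib
    have e1 := Int.floor_add_fract (p i)
    have e2 := Int.floor_add_fract (p b)
    rw [hpfloor i] at e1
    rw [hpfloor b] at e2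
    have hpdk := (hpd i b hib).1
    have hcast : (⌊y i⌋ : ℝ) - (⌊y b⌋ : ℝ) = (⌊y i - y b⌋ : ℝ) := by
      have := hadjfloor b hib
      push_cast [this, hm]
      ring
    linarith
  have hw_apply : ∀ a, a ≠ i → w a = p a := fun a ha => Function.update_of_ne ha _ _
  have hw_i : w i = (m : ℝ) := Function.update_self _ _ _
  have hi_ne0 : i ≠ 0 := by
    intro hh
    rw [hh, hy0, hz0] at hiV'
    exact lt_irrefl _ hiV'
  have hw0 : w 0 = 0 := by
    rw [hw_apply 0 (Ne.symm hi_ne0)]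
    simp only [hp]
    rw [hy0, hz0]
    ring
  have hfract_pb_pos : ∀ b, G.Adj i b → 0 < Int.fract (p b) := by
    intro b hib
    apply fract_pos_of_floor_lt
    rw [hpfloor b]
    exact hpb_strict b hib
  have hwd : ∀ a b, G.Adj a b →
      ((⌊y a - y b⌋ : ℝ) < w a - w b ∧ w a - w b < ⌊y a - y b⌋ + 1) := by
    intro a b hab
    by_cases ha : a = i
    · subst ha
      have hbne : b ≠ a := (G.ne_of_adj hab).symm
      rw [hw_i, hw_apply b hbne]
      have h1 := hpb_strict b hab
      have h2 := hp_fub b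
      have hflR : ((⌊y b⌋ : ℤ) : ℝ) = (m : ℝ) - 1 - (⌊y a - y b⌋ : ℝ) := by
        have := hadjfloor b hab
        push_cast [this]
        ring
      push_cast at hflR
      constructor <;> linarith
    · by_cases hb : b = i
      · subst hb
        rw [hw_i, hw_apply a ha]
        have h1 := hpb_strict a hab.symm
        have h2 := hp_fub a
        have hyd' := hyd b a hab.symm
        have hneg : ⌊y a - y b⌋ = -⌊y b - y a⌋ - 1 := by
          apply hfloor
          · push_cast
            linarith [hyd'.2]
          · push_cast
            linarith [hyd'.1]
        have hflR : ((⌊y a⌋ : ℤ) : ℝ) = (m : ℝ) - 1 - (⌊y b - y a⌋ : ℝ) := by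
          have := hadjfloor a hab.symm
          push_cast [this]
          ring
        rw [hneg]
        push_cast at hflR ⊢
        constructor <;> linarith
      · rw [hw_apply a ha, hw_apply b hb]
        exact hpd a b hab
  have hwfloor : ∀ a, ⌊w a⌋ = if a = i then m else ⌊y a⌋ := by
    intro a
    by_cases ha : a = i
    · subst ha
      rw [hw_i]
      simp
    · rw [hw_apply a ha, hpfloor a]
      simp [ha]
  have hwC : w ∈ C0set G := by
    refine ⟨fun a b hab c heq => ?_, hw0⟩
    have hb := hwd a b hab
    have hdiff : w a - w b = c := by linarith [heq]
    have h1 : (⌊y a - y b⌋ : ℝ) < (c : ℝ) := by rw [← hdiff]; exact hb.1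
    have h2 : (c : ℝ) < (⌊y a - y b⌋ : ℝ) + 1 := by rw [← hdiff]; exact hb.2
    have h1' : ⌊y a - y b⌋ < c := by exact_mod_cast h1
    have h2' : c < ⌊y a - y b⌋ + 1 := by exact_mod_cast h2
    omega
  have hpC0 : p ∈ C0set G := by
    refine ⟨fun a b hab c heq => ?_, by simp only [hp]; rw [hy0, hz0]; ring⟩
    have hb := hpd a b hab
    have : p a - p b = c := by linarith [heq]
    have h1' : ⌊y a - y b⌋ < c := by exact_mod_cast lt_of_lt_of_le hb.1 (le_of_eq this) 
    have h2' : c < ⌊y a - y b⌋ + 1 := by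
      have h2 : (c : ℝ) < (⌊y a - y b⌋ : ℝ) + 1 := by rw [← this]; exact hb.2
      exact_mod_cast h2
    omega
  have hpdf : ∀ a b, G.Adj a b → ⌊p a - p b⌋ = ⌊y a - y b⌋ := fun a b hab =>
    hfloor (hpd a b hab).1 (hpd a b hab).2
  have hwdf : ∀ a b, G.Adj a b → ⌊w a - w b⌋ = ⌊y a - y b⌋ := fun a b hab =>
    hfloor (hwd a b hab).1 (hwd a b hab).2
  have hphiyp : phiDir G y = phiDir G p :=
    (phi_eq_of_floors hpC0.1 hyC hpfloor hpdf).symm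
  have hstep : P0Step G (phiDir G p) (phiDir G w) := by
    refine ⟨memP0_phi hpC0, memP0_phi ⟨hwC.1, hw0⟩,
      i, hi_ne0, fun j hj => ⟨hj, hsource j hj⟩, ?_⟩
    intro a b
    rcases eq_or_ne a i with rfl | ha
    · rcases eq_or_ne b a with rfl | hb
      · constructor
        · rintro ⟨hadj, -⟩
          exact absurd hadj (G.loopless.irrefl b)
        · rintro (⟨-, hadj, -⟩ | ⟨⟨hne', -⟩, -⟩)
          · exact absurd hadj (G.loopless.irrefl b)
          · exact absurd rfl hne'
      · constructor
        · rintro ⟨hadj, hlt⟩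
          exfalso
          rw [hw_i, hw_apply b hb, Int.fract_intCast] at hlt
          linarith [Int.fract_nonneg (p b)]
        · rintro (⟨-, hadj', hlt'⟩ | ⟨⟨hne', -⟩, -⟩)
          · exact absurd hlt' (not_lt.2 (hsource b hadj'.symm).le)
          · exact absurd rfl hne'
    · rcases eq_or_ne b i with rfl | hb
      · constructor
        · rintro ⟨hadj, -⟩
          exact Or.inl ⟨Or.inr rfl, hadj.symm, hsource a hadj.symm⟩
        · rintro (⟨-, hadj', -⟩ | ⟨⟨-, hne'⟩, -⟩)
          · refine ⟨hadj'.symm, ?_⟩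
            rw [hw_i, hw_apply a ha, Int.fract_intCast]
            exact hfract_pb_pos a hadj'
          · exact absurd rfl hne'
      · constructor
        · rintro ⟨hadj, hlt⟩
          rw [hw_apply a ha, hw_apply b hb] at hlt
          exact Or.inr ⟨⟨ha, hb⟩, hadj, hlt⟩
        · rintro (⟨hcase, -⟩ | ⟨-, hadj, hlt⟩)
          · rcases hcase with rfl | rfl
            · exact absurd rfl ha
            · exact absurd rfl hb
          · exact ⟨hadj, by rw [hw_apply a ha, hw_apply b hb]; exact hlt⟩
  have hsum : (∑ a, (⌊z a⌋ - ⌊w a⌋)) = (∑ a, (⌊z a⌋ - ⌊y a⌋)) - 1 := by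
    have hterm : ∀ a : Fin (n + 1),
        ⌊z a⌋ - ⌊w a⌋ = (⌊z a⌋ - ⌊y a⌋) - (if a = i then 1 else 0) := by
      intro a
      rw [hwfloor a]
      by_cases ha : a = i
      · subst ha
        simp [hm]
        omega
      · simp [ha]
    rw [Finset.sum_congr rfl fun a _ => hterm a, Finset.sum_sub_distrib]
    congr 1
    rw [Finset.sum_ite_eq' Finset.univ i fun _ => (1 : ℤ)]
    simp
  refine ⟨w, ⟨hwC.1, hw0⟩, ?_, ?_, hsum, ?_⟩
  · intro a b hab
    rw [← hfd a b hab]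
    exact hwdf a b hab
  · intro a
    by_cases ha : a = i
    · subst ha
      rw [hw_i]
      have := hfloorup a hiV'
      push_cast [hm]
      linarith
    · rw [hw_apply a ha]
      exact hp_ub a
  · rw [hphiyp]
    exact Relation.ReflTransGen.single hstep


/-- Main lemma: the firing sequence exists, by induction on the total floor gap. -/
private lemma main_ind {n : ℕ} (G : SimpleGraph (Fin (n + 1))) :
    ∀ N : ℕ, ∀ y z : Fin (n + 1) → ℝ, y ∈ C0set G → z ∈ C0set G →
      (∀ a b, G.Adj a b → ⌊y a - y b⌋ = ⌊z a - z b⌋) → (∀ a, y a ≤ z a) →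
      (∑ a, (⌊z a⌋ - ⌊y a⌋)) ≤ (N : ℤ) →
      P0le G (phiDir G y) (phiDir G z) := by
  intro N
  induction N with
  | zero =>
    intro y z hy hz hfd hle hsum
    have hnn : ∀ a ∈ Finset.univ, (0 : ℤ) ≤ ⌊z a⌋ - ⌊y a⌋ := fun a _ =>
      sub_nonneg.2 (Int.floor_le_floor (hle a))
    have hz0 : (∑ a, (⌊z a⌋ - ⌊y a⌋)) = 0 :=
      le_antisymm (by exact_mod_cast hsum) (Finset.sum_nonneg hnn)
    have hall := (Finset.sum_eq_zero_iff_of_nonneg hnn).1 hz0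
    have hfl : ∀ a, ⌊y a⌋ = ⌊z a⌋ := fun a => by
      have := hall a (Finset.mem_univ a)
      omega
    rw [phi_eq_of_floors hy.1 hz.1 hfl hfd]
    exact Relation.ReflTransGen.refl
  | succ N ih =>
    intro y z hy hz hfd hle hsum
    by_cases hex : ∃ i, ⌊y i⌋ < ⌊z i⌋
    · obtain ⟨w, hwC0, hwd, hwle, hwsum, hwstep⟩ := step_exists G hy hz hfd hle hex
      have hsum' : (∑ a, (⌊z a⌋ - ⌊w a⌋)) ≤ (N : ℤ) := by
        rw [hwsum]
        push_cast at hsum ⊢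
        linarith
      exact Relation.ReflTransGen.trans hwstep (ih w z hwC0 hz hwd hwle hsum')
    · push_neg at hex
      have hfl : ∀ a, ⌊y a⌋ = ⌊z a⌋ := fun a =>
        le_antisymm (Int.floor_le_floor (hle a)) (hex a)
      rw [phi_eq_of_floors hy.1 hz.1 hfl hfd]
      exact Relation.ReflTransGen.refl

/-- the restriction of `φ` to a region `R` of `C₀` is a poset
homomorphism into `P₀`: componentwise `y ≤ z` implies `φ(y) ≤ φ(z)` in `P₀`. -/
theorem phi_is_poset_hom (n : ℕ) (G : SimpleGraph (Fin (n + 1)))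
    (hG : G.Connected) (R : Set (Fin (n + 1) → ℝ)) (hR : IsRegion (C0set G) R)
    (y z : Fin (n + 1) → ℝ) (hy : y ∈ R) (hz : z ∈ R)
    (hle : ∀ i, y i ≤ z i) :
    P0le G (phiDir G y) (phiDir G z) := by
  obtain ⟨x0, hx0, rfl⟩ := hR
  have hyC : y ∈ C0set G := connectedComponentIn_subset _ _ hy
  have hzC : z ∈ C0set G := connectedComponentIn_subset _ _ hz
  have hfd : ∀ a b, G.Adj a b → ⌊y a - y b⌋ = ⌊z a - z b⌋ := fun a b hab =>
    floor_diff_constant G x0 hy hz hab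
  exact main_ind G (∑ a, (⌊z a⌋ - ⌊y a⌋)).toNat y z hyC hzC hfd hle
    (Int.self_le_toNat _)
end

section
/- Let G be a connected simple graph on the vertex set {0,1,…,n}, let R be a region of C₀, and let x ∈ R. If Ω' is an acyclic orientation of G with 0 as a sink that is comparable to Ω = φ(x) in the poset P₀ (i.e., Ω ≤ Ω' or Ω' ≤ Ω), then there exists a point z ∈ R with φ(z) = Ω'. -/
variable {n : ℕ} {G : SimpleGraph (Fin (n + 1))}

lemma fract_ne_of_adj {x : Fin (n+1) → ℝ} (hx : x ∈ Cset G) {i j : Fin (n+1)}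
    (h : G.Adj i j) : Int.fract (x i) ≠ Int.fract (x j) := by
  intro he
  rcases Int.fract_eq_fract.1 he with ⟨k, hk⟩
  exact hx i j h k (by linarith)

lemma JoinedIn.mem_ccIn {X : Type*} [TopologicalSpace X] {F : Set X} {x y : X}
    (h : JoinedIn F x y) : y ∈ connectedComponentIn F x := by
  obtain ⟨γ, hγ⟩ := h
  have h1 : IsPreconnected (Set.range γ) := isPreconnected_range γ.continuous
  exact h1.subset_connectedComponentIn ⟨0, γ.source⟩
    (by rintro _ ⟨t, rfl⟩; exact hγ t) ⟨1, γ.target⟩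

lemma update_spec {x : Fin (n+1) → ℝ} (hx : x ∈ C0set G) {i : Fin (n+1)} (hi : i ≠ 0) (c : ℝ)
    (hseg : ∀ s ∈ Set.uIcc (x i) c, ∀ j, G.Adj i j → ∀ k : ℤ, s ≠ x j + k) :
    Function.update x i c ∈ C0set G ∧ JoinedIn (C0set G) x (Function.update x i c) := by
  classical
  have key : ∀ s ∈ Set.uIcc (x i) c, Function.update x i s ∈ C0set G := by
    intro s hs
    refine ⟨?_, ?_⟩
    · intro a b hab k
      by_cases ha : a = i
      · have hb : b ≠ i := fun h => G.irrefl (ha ▸ h ▸ hab)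
        rw [ha]
        simp only [Function.update_self, Function.update_of_ne hb]
        exact hseg s hs b (ha ▸ hab) k
      · by_cases hb : b = i
        · rw [hb]
          simp only [Function.update_self, Function.update_of_ne ha]
          intro hcon
          exact hseg s hs a (hb ▸ hab.symm) (-k) (by push_cast; linarith)
        · simp only [Function.update_of_ne ha, Function.update_of_ne hb]
          exact hx.1 a b hab k
    · simp only [Function.update_of_ne (Ne.symm hi)]
      exact hx.2
  have hmemuIcc : ∀ t : unitInterval, (1 - (t:ℝ)) * x i + t * c ∈ Set.uIcc (x i) c := by
    intro t
    have h0 : (0:ℝ) ≤ t := t.2.1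
    have h1 : (t:ℝ) ≤ 1 := t.2.2
    rcases le_total (x i) c with h | h
    · rw [Set.uIcc_of_le h]; constructor <;> nlinarith
    · rw [Set.uIcc_of_ge h]; constructor <;> nlinarith
  refine ⟨by simpa using key c (Set.right_mem_uIcc), ?_⟩
  refine ⟨⟨⟨fun t => Function.update x i ((1 - (t:ℝ)) * x i + t * c), ?_⟩, ?_, ?_⟩, ?_⟩
  · exact continuous_const.update i (by fun_prop)
  · simp
  · simp
  · intro t
    exact key _ (hmemuIcc t)

def fireF {n : ℕ} (d : Fin (n+1) → Fin (n+1) → Prop) (i j k : Fin (n+1)) : Prop :=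
  ((j = i ∨ k = i) ∧ d k j) ∨ ((j ≠ i ∧ k ≠ i) ∧ d j k)

lemma fire_inv {d d' : Fin (n+1) → Fin (n+1) → Prop} {i : Fin (n+1)}
    (h : ∀ j k, d' j k ↔ fireF d i j k) : ∀ j k, d j k ↔ fireF d' i j k := by
  intro j k
  by_cases hj : j = i <;> by_cases hk : k = i <;>
    simp only [fireF, h, hj, hk, ne_eq, not_true_eq_false, not_false_eq_true] <;> tauto

lemma exists_adj (hG : G.Connected) {i : Fin (n+1)} (hi : i ≠ 0) : ∃ j, G.Adj i j := by
  obtain ⟨w⟩ := hG.preconnected i 0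
  cases w with
  | nil => exact absurd rfl hi
  | cons h p => exact ⟨_, h⟩

lemma fire_point (hG : G.Connected) {x : Fin (n+1) → ℝ} (hx : x ∈ C0set G) {i : Fin (n+1)}
    (hi : i ≠ 0) (hsrc : IsSource G (phiDir G x) i)
    (hpos : ∀ j, G.Adj i j → Int.fract (x j) ≠ 0) :
    ∃ z, JoinedIn (C0set G) x z ∧ ∀ j k, phiDir G z j k ↔ fireF (phiDir G x) i j k := by
  classical
  obtain ⟨j₀, hj₀⟩ := exists_adj hG hi
  set N : Finset (Fin (n+1)) := Finset.univ.filter (fun j => G.Adj i j) with hN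
  have hne : N.Nonempty := ⟨j₀, by simp [hN, hj₀]⟩
  have hmemN : ∀ j, G.Adj i j → j ∈ N := fun j h => by simp [hN, h]
  set m : ℝ := N.inf' hne (fun j => Int.fract (x j)) with hm
  have hmle : ∀ j, G.Adj i j → m ≤ Int.fract (x j) := fun j h =>
    Finset.inf'_le _ (hmemN j h)
  have hmpos : 0 < m := by
    rw [hm, Finset.lt_inf'_iff]
    intro j hj
    have hadj : G.Adj i j := by simpa [hN] using hj
    exact lt_of_le_of_ne (Int.fract_nonneg _) (Ne.symm (hpos j hadj))
  have hm1 : m < 1 := lt_of_le_of_lt (hmle j₀ hj₀) (Int.fract_lt_one _)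
  have hsrcf : ∀ j, G.Adj i j → Int.fract (x j) < Int.fract (x i) :=
    fun j h => (hsrc j h).2
  set c : ℝ := (⌊x i⌋ : ℝ) + 1 + m / 2 with hc
  have hxic : x i ≤ c := by
    have := Int.lt_floor_add_one (x i); rw [hc]; linarith
  have hseg : ∀ s ∈ Set.uIcc (x i) c, ∀ j, G.Adj i j → ∀ k : ℤ, s ≠ x j + k := by
    intro s hs j hj k heq
    rw [Set.uIcc_of_le hxic] at hs
    have hfs : Int.fract s = Int.fract (x j) := by rw [heq, Int.fract_add_intCast]
    have hfloorle : (⌊x i⌋ : ℝ) ≤ s := le_trans (Int.floor_le _) hs.1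
    by_cases hcase : s < (⌊x i⌋ : ℝ) + 1
    · have hfl : ⌊s⌋ = ⌊x i⌋ := by
        rw [Int.floor_eq_iff]
        · exact ⟨hfloorle, by exact_mod_cast hcase⟩
      have : Int.fract s = s - (⌊x i⌋ : ℝ) := by rw [Int.fract, hfl]
      have h1 : Int.fract (x i) ≤ Int.fract s := by
        rw [this, Int.fract]; linarith [hs.1]
      exact absurd (hfs ▸ h1) (not_le.2 (hsrcf j hj))
    · push_neg at hcase
      have hfl : ⌊s⌋ = ⌊x i⌋ + 1 := by
        rw [Int.floor_eq_iff]
        constructor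
        · push_cast; linarith
        · push_cast; rw [hc] at hs; linarith [hs.2, hm1]
      have : Int.fract s = s - ((⌊x i⌋ : ℝ) + 1) := by
        rw [Int.fract, hfl]; push_cast; ring
      have h1 : Int.fract s ≤ m / 2 := by rw [this]; rw [hc] at hs; linarith [hs.2]
      have h2 : m ≤ Int.fract s := hfs ▸ hmle j hj
      linarith
  obtain ⟨hzmem, hjoin⟩ := update_spec hx hi c hseg
  set z := Function.update x i c with hz
  have hzi : Int.fract (z i) = m / 2 := by
    have : z i = ((⌊x i⌋ + 1 : ℤ) : ℝ) + m / 2 := by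
      simp [hz, Function.update_self, hc]
    rw [this, Int.fract_intCast_add, Int.fract_eq_self.2 ⟨by linarith, by linarith⟩]
  have hznot : ∀ j, j ≠ i → z j = x j := fun j h => Function.update_of_ne h _ _
  refine ⟨z, hjoin, ?_⟩
  intro j k
  by_cases hj : j = i <;> by_cases hk : k = i
  · subst hj; rw [hk]
    simp only [fireF, phiDir, G.irrefl, false_and, and_false, ne_eq, not_true_eq_false,
      or_self, false_or, or_false]
  · subst hj
    constructor
    · rintro ⟨hadj, hlt⟩
      rw [hznot k hk, hzi] at hlt
      exact absurd hlt (not_lt.2 (by linarith [hmle k hadj]))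
    · rintro (⟨-, hadj, hlt⟩ | ⟨⟨hii, -⟩, -⟩)
      · exact absurd hlt (not_lt.2 (le_of_lt (hsrcf k hadj.symm)))
      · exact absurd rfl hii
  · subst hk
    constructor
    · rintro ⟨hadj, -⟩
      exact Or.inl ⟨Or.inr rfl, hadj.symm, hsrcf j hadj.symm⟩
    · rintro (⟨-, hadj, -⟩ | ⟨⟨-, hii⟩, -⟩)
      · refine ⟨hadj.symm, ?_⟩
        rw [hznot j hj, hzi]
        linarith [hmle j hadj]
      · exact absurd rfl hii
  · rw [show phiDir G z j k ↔ phiDir G x j k by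
      unfold phiDir; rw [hznot j hj, hznot k hk]]
    simp only [fireF, hj, hk, ne_eq, not_false_eq_true, and_self, true_and, false_or,
      or_self, false_and]

lemma unfire_point (hG : G.Connected) {x : Fin (n+1) → ℝ} (hx : x ∈ C0set G) {i : Fin (n+1)}
    (hi : i ≠ 0) (hsink : IsSink G (phiDir G x) i) :
    ∃ z, JoinedIn (C0set G) x z ∧ ∀ j k, phiDir G z j k ↔ fireF (phiDir G x) i j k := by
  classical
  obtain ⟨j₀, hj₀⟩ := exists_adj hG hi
  set N : Finset (Fin (n+1)) := Finset.univ.filter (fun j => G.Adj i j) with hN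
  have hne : N.Nonempty := ⟨j₀, by simp [hN, hj₀]⟩
  have hmemN : ∀ j, G.Adj i j → j ∈ N := fun j h => by simp [hN, h]
  set M : ℝ := N.sup' hne (fun j => Int.fract (x j)) with hM
  have hMle : ∀ j, G.Adj i j → Int.fract (x j) ≤ M := fun j h => by
    rw [hM]; exact Finset.le_sup' (fun j => Int.fract (x j)) (hmemN j h)
  have hM0 : 0 ≤ M := le_trans (Int.fract_nonneg _) (hMle j₀ hj₀)
  have hM1 : M < 1 := by
    rw [hM, Finset.sup'_lt_iff]
    exact fun j _ => Int.fract_lt_one _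
  have hskf : ∀ j, G.Adj i j → Int.fract (x i) < Int.fract (x j) :=
    fun j h => (hsink j h).2
  set c : ℝ := (⌊x i⌋ : ℝ) - 1 + (M + 1) / 2 with hc
  have hcxi : c ≤ x i := by
    have := Int.floor_le (x i); rw [hc]; linarith
  have hseg : ∀ s ∈ Set.uIcc (x i) c, ∀ j, G.Adj i j → ∀ k : ℤ, s ≠ x j + k := by
    intro s hs j hj k heq
    rw [Set.uIcc_of_ge hcxi] at hs
    have hfs : Int.fract s = Int.fract (x j) := by rw [heq, Int.fract_add_intCast]
    by_cases hcase : (⌊x i⌋ : ℝ) ≤ s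
    · have hfl : ⌊s⌋ = ⌊x i⌋ := by
        rw [Int.floor_eq_iff]
        exact ⟨by exact_mod_cast hcase,
          by push_cast; linarith [hs.2, Int.lt_floor_add_one (x i)]⟩
      have h1 : Int.fract s ≤ Int.fract (x i) := by
        rw [Int.fract, hfl, Int.fract]; linarith [hs.2]
      rw [hfs] at h1
      exact absurd h1 (not_le.2 (hskf j hj))
    · push_neg at hcase
      have hfl : ⌊s⌋ = ⌊x i⌋ - 1 := by
        rw [Int.floor_eq_iff]
        constructor
        · push_cast; rw [hc] at hs; linarith [hs.1]
        · push_cast; linarith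
      have h1 : (M + 1) / 2 ≤ Int.fract s := by
        rw [Int.fract, hfl]; push_cast; rw [hc] at hs; linarith [hs.1]
      have h2 : Int.fract s ≤ M := hfs ▸ hMle j hj
      linarith
  obtain ⟨hzmem, hjoin⟩ := update_spec hx hi c hseg
  set z := Function.update x i c with hz
  have hzi : Int.fract (z i) = (M + 1) / 2 := by
    have h1 : z i = ((⌊x i⌋ - 1 : ℤ) : ℝ) + (M + 1) / 2 := by
      simp [hz, Function.update_self, hc]
    rw [h1, Int.fract_intCast_add, Int.fract_eq_self.2 ⟨by linarith, by linarith⟩]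
  have hznot : ∀ j, j ≠ i → z j = x j := fun j h => Function.update_of_ne h _ _
  refine ⟨z, hjoin, ?_⟩
  intro j k
  by_cases hj : j = i <;> by_cases hk : k = i
  · subst hj; rw [hk]
    simp only [fireF, phiDir, G.irrefl, false_and, and_false, ne_eq, not_true_eq_false,
      or_self, false_or, or_false]
  · subst hj
    constructor
    · rintro ⟨hadj, -⟩
      exact Or.inl ⟨Or.inl rfl, hadj.symm, hskf k hadj⟩
    · rintro (⟨-, hadj, -⟩ | ⟨⟨hii, -⟩, -⟩)
      · refine ⟨hadj.symm, ?_⟩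
        rw [hznot k hk, hzi]
        linarith [hMle k hadj.symm]
      · exact absurd rfl hii
  · subst hk
    constructor
    · rintro ⟨hadj, hlt⟩
      rw [hznot j hj, hzi] at hlt
      exact absurd hlt (not_lt.2 (by linarith [hMle j hadj.symm]))
    · rintro (⟨-, hadj, hlt⟩ | ⟨⟨-, hii⟩, -⟩)
      · exact absurd hlt (not_lt.2 (le_of_lt (hskf j hadj)))
      · exact absurd rfl hii
  · rw [show phiDir G z j k ↔ phiDir G x j k by
      unfold phiDir; rw [hznot j hj, hznot k hk]]
    simp only [fireF, hj, hk, ne_eq, not_false_eq_true, and_self, true_and, false_or,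
      or_self, false_and]

lemma fix_zero (hG : G.Connected) {x : Fin (n+1) → ℝ} (hx : x ∈ C0set G) {v : Fin (n+1)}
    (hv : v ≠ 0) (hfz : Int.fract (x v) = 0) :
    ∃ z, JoinedIn (C0set G) x z ∧ phiDir G z = phiDir G x ∧ Int.fract (z v) ≠ 0 ∧
      ∀ w, w ≠ v → z w = x w := by
  classical
  obtain ⟨j₀, hj₀⟩ := exists_adj hG hv
  set N : Finset (Fin (n+1)) := Finset.univ.filter (fun j => G.Adj v j) with hN
  have hne : N.Nonempty := ⟨j₀, by simp [hN, hj₀]⟩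
  have hmemN : ∀ j, G.Adj v j → j ∈ N := fun j h => by simp [hN, h]
  set m : ℝ := N.inf' hne (fun j => Int.fract (x j)) with hm
  have hmle : ∀ j, G.Adj v j → m ≤ Int.fract (x j) := fun j h =>
    Finset.inf'_le _ (hmemN j h)
  have hmpos : 0 < m := by
    rw [hm, Finset.lt_inf'_iff]
    intro j hj
    have hadj : G.Adj v j := by simpa [hN] using hj
    have := fract_ne_of_adj hx.1 hadj
    rw [hfz] at this
    exact lt_of_le_of_ne (Int.fract_nonneg _) this
  have hm1 : m < 1 := lt_of_le_of_lt (hmle j₀ hj₀) (Int.fract_lt_one _)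
  have hxvint : x v = (⌊x v⌋ : ℝ) := by
    have := Int.fract (x v)
    have h2 : x v - (⌊x v⌋ : ℝ) = 0 := hfz
    linarith
  set c : ℝ := x v + m / 2 with hc
  have hxvc : x v ≤ c := by rw [hc]; linarith
  have hseg : ∀ s ∈ Set.uIcc (x v) c, ∀ j, G.Adj v j → ∀ k : ℤ, s ≠ x j + k := by
    intro s hs j hj k heq
    rw [Set.uIcc_of_le hxvc] at hs
    have hfs : Int.fract s = Int.fract (x j) := by rw [heq, Int.fract_add_intCast]
    have hfl : ⌊s⌋ = ⌊x v⌋ := by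
      rw [Int.floor_eq_iff]
      exact ⟨by rw [← hxvint]; exact hs.1, by push_cast; rw [← hxvint]; rw [hc] at hs; linarith [hs.2]⟩
    have h1 : Int.fract s ≤ m / 2 := by
      rw [Int.fract, hfl, ← hxvint]; rw [hc] at hs; linarith [hs.2]
    have h2 : m ≤ Int.fract s := hfs ▸ hmle j hj
    linarith
  obtain ⟨hzmem, hjoin⟩ := update_spec hx hv c hseg
  set z := Function.update x v c with hz
  have hzv : Int.fract (z v) = m / 2 := by
    have h1 : z v = (⌊x v⌋ : ℝ) + m / 2 := by
      rw [hz, Function.update_self, hc]; linarith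
    rw [h1, Int.fract_intCast_add, Int.fract_eq_self.2 ⟨by linarith, by linarith⟩]
  have hznot : ∀ j, j ≠ v → z j = x j := fun j h => Function.update_of_ne h _ _
  refine ⟨z, hjoin, ?_, by rw [hzv]; positivity, hznot⟩
  funext j k
  apply propext
  by_cases hj : j = v <;> by_cases hk : k = v
  · rw [hj, hk]; simp [phiDir, G.irrefl]
  · subst hj
    constructor
    · rintro ⟨hadj, hlt⟩
      rw [hznot k hk, hzv] at hlt
      exact absurd hlt (not_lt.2 (by linarith [hmle k hadj]))
    · rintro ⟨hadj, hlt⟩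
      rw [hfz] at hlt
      exact absurd hlt (not_lt.2 (Int.fract_nonneg _))
  · subst hk
    constructor
    · rintro ⟨hadj, -⟩
      refine ⟨hadj, ?_⟩
      rw [hfz]
      have := fract_ne_of_adj hx.1 hadj.symm
      rw [hfz] at this
      exact lt_of_le_of_ne (Int.fract_nonneg _) this
    · rintro ⟨hadj, -⟩
      refine ⟨hadj, ?_⟩
      rw [hznot j hj, hzv]
      linarith [hmle j hadj.symm]
  · unfold phiDir; rw [hznot j hj, hznot k hk]

lemma clear_zeros (hG : G.Connected) {x : Fin (n+1) → ℝ} (hx : x ∈ C0set G) :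
    ∃ z, JoinedIn (C0set G) x z ∧ phiDir G z = phiDir G x ∧
      ∀ v : Fin (n+1), v ≠ 0 → Int.fract (z v) ≠ 0 := by
  classical
  suffices h : ∀ (N : ℕ) (x : Fin (n+1) → ℝ), x ∈ C0set G →
      (Finset.univ.filter fun v : Fin (n+1) => v ≠ 0 ∧ Int.fract (x v) = 0).card ≤ N →
      ∃ z, JoinedIn (C0set G) x z ∧ phiDir G z = phiDir G x ∧
        ∀ v : Fin (n+1), v ≠ 0 → Int.fract (z v) ≠ 0 by
    exact h _ x hx le_rfl
  intro N
  induction N with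
  | zero =>
    intro x hx hcard
    refine ⟨x, JoinedIn.refl hx, rfl, ?_⟩
    intro v hv hfv
    have : v ∈ Finset.univ.filter fun v : Fin (n+1) => v ≠ 0 ∧ Int.fract (x v) = 0 := by
      simp [hv, hfv]
    rw [Finset.card_eq_zero.1 (Nat.le_zero.1 hcard)] at this
    exact absurd this (Finset.notMem_empty v)
  | succ N ih =>
    intro x hx hcard
    by_cases hE : ∃ v : Fin (n+1), v ≠ 0 ∧ Int.fract (x v) = 0
    · obtain ⟨v, hv, hfv⟩ := hE
      obtain ⟨z₁, hj₁, hφ₁, hnz₁, heq₁⟩ := fix_zero hG hx hv hfv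
      have hsub : (Finset.univ.filter fun w : Fin (n+1) => w ≠ 0 ∧ Int.fract (z₁ w) = 0) ⊆
          (Finset.univ.filter fun w : Fin (n+1) => w ≠ 0 ∧ Int.fract (x w) = 0).erase v := by
        intro w hw
        simp only [Finset.mem_filter, Finset.mem_univ, true_and] at hw
        have hwv : w ≠ v := by
          rintro rfl; exact hnz₁ hw.2
        rw [Finset.mem_erase]
        refine ⟨hwv, ?_⟩
        simp only [Finset.mem_filter, Finset.mem_univ, true_and]
        exact ⟨hw.1, by rw [← heq₁ w hwv]; exact hw.2⟩
      have hvmem : v ∈ (Finset.univ.filter fun w : Fin (n+1) => w ≠ 0 ∧ Int.fract (x w) = 0) := by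
        simp [hv, hfv]
      have hcard₁ : (Finset.univ.filter fun w : Fin (n+1) => w ≠ 0 ∧ Int.fract (z₁ w) = 0).card ≤ N := by
        calc _ ≤ ((Finset.univ.filter fun w : Fin (n+1) => w ≠ 0 ∧ Int.fract (x w) = 0).erase v).card :=
              Finset.card_le_card hsub
          _ = (Finset.univ.filter fun w : Fin (n+1) => w ≠ 0 ∧ Int.fract (x w) = 0).card - 1 :=
              Finset.card_erase_of_mem hvmem
          _ ≤ N := by omega
      obtain ⟨z, hj, hφ, hnz⟩ := ih z₁ hj₁.target_mem hcard₁
      exact ⟨z, hj₁.trans hj, by rw [hφ, hφ₁], hnz⟩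
    · push_neg at hE
      refine ⟨x, JoinedIn.refl hx, rfl, fun v hv => hE v hv⟩

lemma step_spec (hG : G.Connected) {z : Fin (n+1) → ℝ} {d' : Fin (n+1) → Fin (n+1) → Prop}
    (hz : z ∈ C0set G) (hstep : P0Step G (phiDir G z) d') :
    ∃ z', JoinedIn (C0set G) z z' ∧ phiDir G z' = d' := by
  obtain ⟨h1, h2, i, hi0, hsrc, hform⟩ := hstep
  obtain ⟨z₁, hj₁, hφ₁, hnz₁⟩ := clear_zeros hG hz
  have hi0' : ¬ G.Adj i 0 := by
    intro hadj
    have hd0i : d' 0 i := (hform 0 i).2 (Or.inl ⟨Or.inr rfl, hsrc 0 hadj⟩)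
    have hdi0 : d' i 0 := h2.2 i hadj.symm
    exact ((h2.1.1.2 0 i hadj.symm).1 hd0i) hdi0
  have hpos : ∀ j, G.Adj i j → Int.fract (z₁ j) ≠ 0 := by
    intro j hj
    rcases eq_or_ne j 0 with rfl | hne
    · exact absurd hj hi0'
    · exact hnz₁ j hne
  have hsrc₁ : IsSource G (phiDir G z₁) i := by rw [hφ₁]; exact hsrc
  obtain ⟨z₂, hj₂, hiff⟩ := fire_point hG hj₁.target_mem hi0 hsrc₁ hpos
  refine ⟨z₂, hj₁.trans hj₂, ?_⟩
  funext j k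
  apply propext
  rw [hiff j k, hform j k]
  unfold fireF
  rw [hφ₁]

lemma unstep_spec (hG : G.Connected) {z : Fin (n+1) → ℝ} {d' : Fin (n+1) → Fin (n+1) → Prop}
    (hz : z ∈ C0set G) (hstep : P0Step G d' (phiDir G z)) :
    ∃ z', JoinedIn (C0set G) z z' ∧ phiDir G z' = d' := by
  obtain ⟨h1, h2, i, hi0, hsrc, hform⟩ := hstep
  have hsink : IsSink G (phiDir G z) i := by
    intro j hj
    exact (hform j i).2 (Or.inl ⟨Or.inr rfl, hsrc j hj⟩)
  obtain ⟨z', hj', hiff⟩ := unfire_point hG hz hi0 hsink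
  have hinv := fire_inv (d := d') (d' := phiDir G z) (i := i) hform
  refine ⟨z', hj', ?_⟩
  funext j k
  apply propext
  rw [hiff j k, hinv j k]

lemma fwd (hG : G.Connected) {z : Fin (n+1) → ℝ} {b : Fin (n+1) → Fin (n+1) → Prop}
    (hz : z ∈ C0set G) (h : Relation.ReflTransGen (P0Step G) (phiDir G z) b) :
    ∃ z', JoinedIn (C0set G) z z' ∧ phiDir G z' = b := by
  induction h with
  | refl => exact ⟨z, JoinedIn.refl hz, rfl⟩
  | tail h1 hs ih =>
    obtain ⟨z₂, hj, hφ⟩ := ih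
    rw [← hφ] at hs
    obtain ⟨z₃, hj2, hφ2⟩ := step_spec hG hj.target_mem hs
    exact ⟨z₃, hj.trans hj2, hφ2⟩

lemma bwd (hG : G.Connected) {a b : Fin (n+1) → Fin (n+1) → Prop}
    (h : Relation.ReflTransGen (P0Step G) a b) :
    ∀ z, z ∈ C0set G → phiDir G z = b →
      ∃ z', JoinedIn (C0set G) z z' ∧ phiDir G z' = a := by
  induction h with
  | refl => exact fun z hz hzb => ⟨z, JoinedIn.refl hz, hzb⟩
  | tail h1 hs ih =>
    intro z hz hzb
    rw [← hzb] at hs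
    obtain ⟨z₂, hj, hφ⟩ := unstep_spec hG hz hs
    obtain ⟨z', hj', hφ'⟩ := ih z₂ hj.target_mem hφ
    exact ⟨z', hj.trans hj', hφ'⟩


/-- any orientation of `P₀` comparable to `φ(x)` for `x` in a region `R`
of `C₀` lifts to a point of the same region `R`. -/
theorem lift_comparable_orientation (n : ℕ) (G : SimpleGraph (Fin (n + 1)))
    (hG : G.Connected) (R : Set (Fin (n + 1) → ℝ)) (hR : IsRegion (C0set G) R)
    (x : Fin (n + 1) → ℝ) (hx : x ∈ R)
    (d' : Fin (n + 1) → Fin (n + 1) → Prop) (hd' : MemP0 G d')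
    (hcomp : P0le G (phiDir G x) d' ∨ P0le G d' (phiDir G x)) :
    ∃ z ∈ R, phiDir G z = d' := by
  obtain ⟨x₀, hx₀, hRe⟩ := hR
  have hxC : x ∈ C0set G := by
    rw [hRe] at hx
    exact connectedComponentIn_subset _ _ hx
  have hRx : R = connectedComponentIn (C0set G) x := by
    rw [hRe]
    exact connectedComponentIn_eq (hRe ▸ hx)
  have main : ∃ z, JoinedIn (C0set G) x z ∧ phiDir G z = d' := by
    rcases hcomp with h | h
    · exact fwd hG hxC h
    · exact bwd hG h x hxC rfl
  obtain ⟨z, hj, hφ⟩ := main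
  exact ⟨z, by rw [hRx]; exact hj.mem_ccIn, hφ⟩
end
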